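/- arXiv:1511.00080 — 9 statements merged into one kernel-verified Lean document; each statement's English description precedes it below -/
import Mathlib

section
/- If π is a diamond permutation of type (v,d) avoiding the pattern 132, then within each block of v consecutive positions the entries of π appear in increasing order. -/
/-!
Common definitions.  Positions and values are 0-indexed throughout:
a "diamond permutation of type (v,d)" is a permutation of `Fin (v*d)`
whose `i`-th block of `v` consecutive positions (positions `i*v, …, i*v+v-1`)
has its minimum value in the first position and its maximum value in the
last position of the block.
-/

def IsDiamond (v d : ℕ) (π : Equiv.Perm (Fin (v * d))) : Prop :=
  ∀ i, i < d → ∀ j, j < v →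
    ∀ (h0 : i * v < v * d) (hj : i * v + j < v * d) (hl : i * v + (v - 1) < v * d),
      π ⟨i * v, h0⟩ ≤ π ⟨i * v + j, hj⟩ ∧ π ⟨i * v + j, hj⟩ ≤ π ⟨i * v + (v - 1), hl⟩

def Avoids123 {n : ℕ} (π : Equiv.Perm (Fin n)) : Prop :=
  ¬ ∃ i j k : Fin n, i < j ∧ j < k ∧ π i < π j ∧ π j < π k

def Avoids132 {n : ℕ} (π : Equiv.Perm (Fin n)) : Prop :=
  ¬ ∃ i j k : Fin n, i < j ∧ j < k ∧ π i < π k ∧ π k < π j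

def Avoids213 {n : ℕ} (π : Equiv.Perm (Fin n)) : Prop :=
  ¬ ∃ i j k : Fin n, i < j ∧ j < k ∧ π j < π i ∧ π i < π k

def Avoids231 {n : ℕ} (π : Equiv.Perm (Fin n)) : Prop :=
  ¬ ∃ i j k : Fin n, i < j ∧ j < k ∧ π k < π i ∧ π i < π j

def Avoids312 {n : ℕ} (π : Equiv.Perm (Fin n)) : Prop :=
  ¬ ∃ i j k : Fin n, i < j ∧ j < k ∧ π j < π k ∧ π k < π i

def Avoids321 {n : ℕ} (π : Equiv.Perm (Fin n)) : Prop :=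
  ¬ ∃ i j k : Fin n, i < j ∧ j < k ∧ π k < π j ∧ π j < π i

/-- `π` contains the pattern `ρ`: some subsequence of `π` is order-isomorphic to `ρ`. -/
def ContainsPat {m n : ℕ} (ρ : Equiv.Perm (Fin m)) (π : Equiv.Perm (Fin n)) : Prop :=
  ∃ f : Fin m → Fin n, StrictMono f ∧ ∀ a b, π (f a) < π (f b) ↔ ρ a < ρ b

def AvoidsPat {m n : ℕ} (ρ : Equiv.Perm (Fin m)) (π : Equiv.Perm (Fin n)) : Prop :=
  ¬ ContainsPat ρ π

/-- The reverse-complement of a permutation: `(rcPerm π) i = n - 1 - π (n - 1 - i)`. -/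
def rcPerm {n : ℕ} (π : Equiv.Perm (Fin n)) : Equiv.Perm (Fin n) :=
  (Fin.revPerm.trans π).trans Fin.revPerm

/-- The number of descents of `π`. -/
noncomputable def desNum {n : ℕ} (π : Equiv.Perm (Fin n)) : ℕ :=
  Nat.card {i : Fin n // ∃ h : i.1 + 1 < n, π ⟨i.1 + 1, h⟩ < π i}

theorem avoids132_blocks_increasing (v d : ℕ) (π : Equiv.Perm (Fin (v * d)))
    (hD : IsDiamond v d π) (hA : Avoids132 π) :
    ∀ i, i < d → ∀ j1 j2, j1 < j2 → j2 < v →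
      ∀ (h1 : i * v + j1 < v * d) (h2 : i * v + j2 < v * d),
        π ⟨i * v + j1, h1⟩ < π ⟨i * v + j2, h2⟩ := by
  intro i hi j1 j2 hj hj2 h1 h2
  have h0 : i * v < v * d := lt_of_le_of_lt (Nat.le_add_right _ _) h1
  have hl : i * v + (v - 1) < v * d := by
    have h3 : i * v + v ≤ v * d := by
      have := Nat.mul_le_mul_right v hi
      calc i * v + v = (i + 1) * v := by ring
        _ ≤ d * v := this
        _ = v * d := Nat.mul_comm _ _
    omega
  have hmin2 := (hD i hi j2 hj2 h0 h2 hl).1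
  have hne12 : (⟨i*v+j1,h1⟩ : Fin (v*d)) ≠ ⟨i*v+j2,h2⟩ := by
    simp only [ne_eq, Fin.mk.injEq]; omega
  have hnef2 : (⟨i*v,h0⟩ : Fin (v*d)) ≠ ⟨i*v+j2,h2⟩ := by
    simp only [ne_eq, Fin.mk.injEq]; omega
  have hfb : π ⟨i*v,h0⟩ < π ⟨i*v+j2,h2⟩ :=
    lt_of_le_of_ne hmin2 (fun h => hnef2 (π.injective h))
  rcases Nat.eq_zero_or_pos j1 with hz | hpos
  · subst hz
    have : (⟨i*v+0,h1⟩ : Fin (v*d)) = ⟨i*v,h0⟩ := by simp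
    rw [this]; exact hfb
  · by_contra hcon
    have hba : π ⟨i*v+j2,h2⟩ < π ⟨i*v+j1,h1⟩ :=
      lt_of_le_of_ne (le_of_not_gt hcon) (fun h => hne12 (π.injective h.symm))
    exact hA ⟨⟨i*v,h0⟩, ⟨i*v+j1,h1⟩, ⟨i*v+j2,h2⟩, by simp [Fin.lt_def]; omega,
      by simp [Fin.lt_def]; omega, hfb, hba⟩
end

section
/- For v ≥ 4 and d ≥ 1, the number of diamond permutations of type (v,d) avoiding the pattern 231 equals the number of diamond permutations of type (v,d) avoiding the pattern 312. -/
lemma rcPerm_apply {n : ℕ} (π : Equiv.Perm (Fin n)) (i : Fin n) :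
    rcPerm π i = (π i.rev).rev := rfl

lemma rcPerm_rcPerm {n : ℕ} (π : Equiv.Perm (Fin n)) : rcPerm (rcPerm π) = π := by
  ext i
  simp [rcPerm_apply, Fin.rev_rev]

lemma avoids231_rc {n : ℕ} (π : Equiv.Perm (Fin n)) (h : Avoids231 π) :
    Avoids312 (rcPerm π) := by
  rintro ⟨i, j, k, hij, hjk, h1, h2⟩
  rw [rcPerm_apply, rcPerm_apply, Fin.rev_lt_rev] at h1 h2
  exact h ⟨k.rev, j.rev, i.rev, Fin.rev_lt_rev.mpr hjk, Fin.rev_lt_rev.mpr hij, h2, h1⟩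

lemma avoids312_rc {n : ℕ} (π : Equiv.Perm (Fin n)) (h : Avoids312 π) :
    Avoids231 (rcPerm π) := by
  rintro ⟨i, j, k, hij, hjk, h1, h2⟩
  rw [rcPerm_apply, rcPerm_apply, Fin.rev_lt_rev] at h1 h2
  exact h ⟨k.rev, j.rev, i.rev, Fin.rev_lt_rev.mpr hjk, Fin.rev_lt_rev.mpr hij, h2, h1⟩

lemma block_lt (v d i j : ℕ) (hv : 1 ≤ v) (hi : i < d) (hj : j < v) : i * v + j < v * d := by
  have h1 : (i + 1) * v ≤ d * v := Nat.mul_le_mul_right v hi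
  have h2 : (i + 1) * v = i * v + v := by ring
  have h3 : v * d = d * v := Nat.mul_comm v d
  omega

lemma rev_block (v d i j : ℕ) (hv : 1 ≤ v) (hi : i < d) (hj : j < v) (h : i * v + j < v * d) :
    (⟨i * v + j, h⟩ : Fin (v * d)).rev
      = ⟨(d - 1 - i) * v + (v - 1 - j),
          block_lt v d (d - 1 - i) (v - 1 - j) hv (by omega) (by omega)⟩ := by
  ext
  simp only [Fin.val_rev]
  have h1 : (i + 1) * v ≤ d * v := Nat.mul_le_mul_right v hi
  have h2 : (i + 1) * v = i * v + v := by ring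
  have h3 : v * d = d * v := Nat.mul_comm v d
  have h4 : (d - 1 - i) * v = d * v - (i * v + v) := by
    rw [show d - 1 - i = d - (i + 1) by omega, Nat.sub_mul, h2]
  omega

lemma isDiamond_rc (v d : ℕ) (hv : 1 ≤ v) (π : Equiv.Perm (Fin (v * d)))
    (h : IsDiamond v d π) : IsDiamond v d (rcPerm π) := by
  intro i hi j hj h0 hjv hl
  have hi' : d - 1 - i < d := by omega
  have e0 : (⟨i * v, h0⟩ : Fin (v * d)) = ⟨i * v + 0, by omega⟩ := rfl
  have r0 := rev_block v d i 0 hv hi (by omega) (by omega)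
  have rj := rev_block v d i j hv hi hj hjv
  have rl := rev_block v d i (v - 1) hv hi (by omega) hl
  have hb0 := h (d - 1 - i) hi' (v - 1 - 0) (by omega)
    (block_lt v d (d - 1 - i) 0 hv hi' (by omega)) (block_lt v d (d - 1 - i) (v - 1 - 0) hv hi' (by omega))
    (block_lt v d (d - 1 - i) (v - 1) hv hi' (by omega))
  have hbj := h (d - 1 - i) hi' (v - 1 - j) (by omega)
    (block_lt v d (d - 1 - i) 0 hv hi' (by omega)) (block_lt v d (d - 1 - i) (v - 1 - j) hv hi' (by omega))
    (block_lt v d (d - 1 - i) (v - 1) hv hi' (by omega))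
  constructor
  · rw [e0, rcPerm_apply, rcPerm_apply, r0, rj, Fin.rev_le_rev]
    simpa using hbj.2
  · rw [rcPerm_apply, rcPerm_apply, rj, rl, Fin.rev_le_rev]
    have := hbj.1
    simpa using this

theorem avoids231_eq_avoids312 (v d : ℕ) (hv : 4 ≤ v) (hd : 1 ≤ d) :
    Nat.card {π : Equiv.Perm (Fin (v * d)) // IsDiamond v d π ∧ Avoids231 π} =
      Nat.card {π : Equiv.Perm (Fin (v * d)) // IsDiamond v d π ∧ Avoids312 π} := by
  have hv1 : 1 ≤ v := by omega
  apply Nat.card_congr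
  exact {
    toFun := fun x => ⟨rcPerm x.1, isDiamond_rc v d hv1 x.1 x.2.1, avoids231_rc x.1 x.2.2⟩
    invFun := fun x => ⟨rcPerm x.1, isDiamond_rc v d hv1 x.1 x.2.1, avoids312_rc x.1 x.2.2⟩
    left_inv := fun x => by simp [rcPerm_rcPerm]
    right_inv := fun x => by simp [rcPerm_rcPerm] }
end

section
/- If π is a diamond permutation of type (v,d) avoiding both 132 and 213, then for each block i (1 ≤ i ≤ d) the entries of the i-th block of v consecutive positions are v consecutive integers appearing in increasing order; that is, the blocks of π are, in some order, the intervals {1,...,v}, {v+1,...,2v}, ..., {v(d-1)+1,...,vd}, each written in increasing order. -/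
section Aux

variable {v d : ℕ} (π : Equiv.Perm (Fin (v * d)))

lemma aux_pos_lt (hv : 0 < v) {i : ℕ} (hi : i < d) : i * v < v * d := by
  have h1 : (i + 1) * v ≤ d * v := Nat.mul_le_mul_right v hi
  have h2 : i * v + v = (i + 1) * v := by ring
  have h3 : d * v = v * d := Nat.mul_comm d v
  omega

lemma aux_blk_eq {i1 j1 i2 j2 : ℕ} (h1 : j1 < v) (h2 : j2 < v)
    (h : i1 * v + j1 = i2 * v + j2) : i1 = i2 ∧ j1 = j2 := by
  have hv : 0 < v := by omega
  have e1 : (i1 * v + j1) / v = i1 := by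
    rw [Nat.mul_comm, Nat.mul_add_div hv, Nat.div_eq_of_lt h1]
    omega
  have e2 : (i2 * v + j2) / v = i2 := by
    rw [Nat.mul_comm, Nat.mul_add_div hv, Nat.div_eq_of_lt h2]
    omega
  have hi : i1 = i2 := by rw [← e1, ← e2, h]
  subst hi
  exact ⟨rfl, by omega⟩

lemma aux_step (hD : IsDiamond v d π) (hA : Avoids132 π) (hB : Avoids213 π)
    {i j : ℕ} (hi : i < d) (hj : j + 1 < v)
    (h : i * v + j < v * d) (h' : i * v + (j + 1) < v * d) :
    (π ⟨i * v + (j + 1), h'⟩).1 = (π ⟨i * v + j, h⟩).1 + 1 := by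
  have hv : 0 < v := by omega
  set p : Fin (v * d) := ⟨i * v + j, h⟩ with hp
  set q : Fin (v * d) := ⟨i * v + (j + 1), h'⟩ with hq
  have hpq : p < q := by simp [hp, hq, Fin.lt_def]
  have hne : π p ≠ π q := by
    intro he
    have := π.injective he
    simp [hp, hq, Fin.ext_iff] at this
  have hb' : i * v + (v - 1) < v * d := by
    have := aux_pos_lt (v := v) (d := d) hv hi
    have h2 : i * v + v = (i + 1) * v := by ring
    have h1 : (i + 1) * v ≤ d * v := Nat.mul_le_mul_right v hi
    have h3 : d * v = v * d := Nat.mul_comm d v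
    omega
  set b : Fin (v * d) := ⟨i * v + (v - 1), hb'⟩ with hbdef
  have h0 : i * v < v * d := aux_pos_lt hv hi
  -- increasing
  have hinc : π p < π q := by
    by_contra hle
    push_neg at hle
    have hlt : π q < π p := lt_of_le_of_ne hle (Ne.symm hne)
    rcases Nat.lt_or_ge (j + 1) (v - 1) with hcase | hcase
    · -- q < b : pattern 213 on (p, q, b)
      have hqb : q < b := by simp [hq, hbdef, Fin.lt_def]; omega
      have hpb : π p < π b := by
        have := (hD i hi j (by omega) h0 h hb').2
        refine lt_of_le_of_ne this ?_
        intro he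
        have := π.injective he
        simp [hp, hbdef, Fin.ext_iff] at this
        omega
      exact hB ⟨p, q, b, hpq, hqb, hlt, hpb⟩
    · -- j + 1 = v - 1, so q = b, but π p ≤ π b
      have hqb : q = b := by
        have : j + 1 = v - 1 := by omega
        simp [hq, hbdef, Fin.ext_iff, this]
      have hle2 : π p ≤ π b := (hD i hi j (by omega) h0 h hb').2
      rw [hqb] at hlt
      exact absurd hle2 (not_le.mpr hlt)
  -- consecutive
  have hx : (π p).1 + 1 < v * d := by
    have : (π p).1 < (π q).1 := hinc
    have := (π q).2
    omega
  by_contra hne2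
  have hgt : (π p).1 + 1 < (π q).1 := by
    have : (π p).1 < (π q).1 := hinc
    omega
  set x : Fin (v * d) := ⟨(π p).1 + 1, hx⟩ with hxdef
  set r : Fin (v * d) := π.symm x with hrdef
  have hπr : π r = x := π.apply_symm_apply x
  have hrp : r ≠ p := by
    intro he; rw [he] at hπr
    have : (π p).1 = (π p).1 + 1 := congrArg Fin.val hπr
    omega
  have hrq : r ≠ q := by
    intro he; rw [he] at hπr
    have : (π q).1 = (π p).1 + 1 := congrArg Fin.val hπr
    omega
  rcases lt_trichotomy r p with hlt | heq | hgt'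
  · -- pattern 213 on (r, p, q): π p < π r < π q
    refine hB ⟨r, p, q, hlt, hpq, ?_, ?_⟩
    · rw [hπr]; exact Fin.lt_def.mpr (Nat.lt_succ_self _)
    · rw [hπr]; exact Fin.lt_def.mpr hgt
  · exact hrp heq
  · -- r > p, r ≠ q, positions p q adjacent ⇒ q < r
    have hqr : q < r := by
      have h1 : p.1 < r.1 := hgt'
      have h2 : q.1 = p.1 + 1 := rfl
      have h3 : r.1 ≠ q.1 := fun he => hrq (Fin.ext he)
      have h4 : q.1 ≤ r.1 := by omega
      exact Fin.lt_def.mpr (Nat.lt_of_le_of_ne h4 (fun he => h3 he.symm))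
    refine hA ⟨p, q, r, hpq, hqr, ?_, ?_⟩
    · rw [hπr]; exact Fin.lt_def.mpr (Nat.lt_succ_self _)
    · rw [hπr]; exact Fin.lt_def.mpr hgt

lemma aux_block_val (hD : IsDiamond v d π) (hA : Avoids132 π) (hB : Avoids213 π)
    {i : ℕ} (hi : i < d) (h0 : i * v < v * d) :
    ∀ j, j < v → ∀ (h : i * v + j < v * d),
      (π ⟨i * v + j, h⟩).1 = (π ⟨i * v, h0⟩).1 + j := by
  intro j
  induction j with
  | zero => intro _ h; rfl
  | succ k ih =>
    intro hk1 h
    have hk : i * v + k < v * d := by omega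
    rw [aux_step π hD hA hB hi hk1 hk h, ih (by omega) hk]
    omega

end Aux

theorem avoids132_213_blocks (v d : ℕ) (π : Equiv.Perm (Fin (v * d)))
    (hD : IsDiamond v d π) (hA : Avoids132 π) (hB : Avoids213 π) :
    ∀ i, i < d → ∃ m, m < d ∧ ∀ j, j < v →
      ∀ (h : i * v + j < v * d), (π ⟨i * v + j, h⟩).1 = m * v + j := by
  intro i hi
  rcases Nat.eq_zero_or_pos v with hv | hv
  · exact ⟨i, hi, fun j hj => absurd hj (by omega)⟩
  have h0 : i * v < v * d := aux_pos_lt hv hi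
  set sval : ℕ → ℕ := fun i' =>
    if h : i' * v < v * d then (π ⟨i' * v, h⟩).1 else 0 with hsval
  have hsval_eq : ∀ i' (h : i' * v < v * d), sval i' = (π ⟨i' * v, h⟩).1 := by
    intro i' h; simp [hsval, h]
  -- general block formula
  have hform : ∀ i', i' < d → ∀ j', j' < v → ∀ (h : i' * v + j' < v * d),
      (π ⟨i' * v + j', h⟩).1 = sval i' + j' := by
    intro i' hi' j' hj' h
    have h0' : i' * v < v * d := aux_pos_lt hv hi'
    rw [hsval_eq i' h0']
    exact aux_block_val π hD hA hB hi' h0' j' hj' h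
  set s := sval i with hs
  have hslt : s < v * d := by rw [hs, hsval_eq i h0]; exact (π ⟨i * v, h0⟩).2
  set T := (Finset.range d).filter (fun i' => sval i' < s) with hT
  -- the values below s are exactly the blocks entirely below s
  have hunion : Finset.range s = T.biUnion (fun i' => Finset.Ico (sval i') (sval i' + v)) := by
    ext x
    simp only [Finset.mem_range, Finset.mem_biUnion, hT, Finset.mem_filter, Finset.mem_Ico]
    constructor
    · intro hxs
      have hxlt : x < v * d := by omega
      set y : Fin (v * d) := ⟨x, hxlt⟩ with hy
      set p : Fin (v * d) := π.symm y with hpd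
      have hπp : π p = y := π.apply_symm_apply y
      set i' := p.1 / v with hi'
      set j' := p.1 % v with hj'
      have hdm : i' * v + j' = p.1 := by
        rw [hi', hj', Nat.mul_comm]; exact Nat.div_add_mod p.1 v
      have hj'v : j' < v := Nat.mod_lt _ hv
      have hi'd : i' < d := by
        rw [hi']
        exact Nat.div_lt_iff_lt_mul hv |>.mpr (by rw [Nat.mul_comm d v]; exact p.2)
      have hxval : x = sval i' + j' := by
        have : (⟨i' * v + j', by omega⟩ : Fin (v * d)) = p := Fin.ext hdm
        rw [← hform i' hi'd j' hj'v (by omega), this, hπp]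
      refine ⟨i', ⟨hi'd, ?_⟩, by omega, by omega⟩
      omega
    · rintro ⟨i', ⟨hi'd, hsi'⟩, hx1, hx2⟩
      set j' := x - sval i' with hj'
      have hj'v : j' < v := by omega
      have hxval : x = sval i' + j' := by omega
      by_contra hxs
      push_neg at hxs
      -- then s lies inside block i', i.e. s = sval i' + j'' with 0 < j'' < v
      set j'' := s - sval i' with hj''
      have hj''v : 0 < j'' ∧ j'' < v := by omega
      have h1 : i' * v + j'' < v * d := by
        have := aux_pos_lt hv hi'd
        have h2 : i' * v + v = (i' + 1) * v := by ring
        have h3 : (i' + 1) * v ≤ d * v := Nat.mul_le_mul_right v hi'd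
        have h4 : d * v = v * d := Nat.mul_comm d v
        omega
      have hv1 : (π ⟨i' * v + j'', h1⟩).1 = s := by
        rw [hform i' hi'd j'' (by omega) h1]; omega
      have hv2 : (π ⟨i * v, h0⟩).1 = s := (hsval_eq i h0).symm
      have hpeq : (⟨i' * v + j'', h1⟩ : Fin (v * d)) = ⟨i * v, h0⟩ :=
        π.injective (Fin.val_injective (by rw [hv1, hv2]))
      have : i' * v + j'' = i * v + 0 := by simpa [Fin.ext_iff] using hpeq
      have := (aux_blk_eq (v := v) (by omega) hv this).2
      omega
  -- disjointness
  have hdisj : ∀ i1 ∈ T, ∀ i2 ∈ T, i1 ≠ i2 →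
      Disjoint (Finset.Ico (sval i1) (sval i1 + v)) (Finset.Ico (sval i2) (sval i2 + v)) := by
    intro i1 h1 i2 h2 hne
    rw [Finset.disjoint_left]
    intro x hx1 hx2
    simp only [Finset.mem_Ico] at hx1 hx2
    simp only [hT, Finset.mem_filter, Finset.mem_range] at h1 h2
    have hj1 : x - sval i1 < v := by omega
    have hj2 : x - sval i2 < v := by omega
    have e1 : i1 * v + (x - sval i1) < v * d := by
      have := aux_pos_lt hv h1.1
      have h2' : i1 * v + v = (i1 + 1) * v := by ring
      have h3 : (i1 + 1) * v ≤ d * v := Nat.mul_le_mul_right v h1.1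
      have h4 : d * v = v * d := Nat.mul_comm d v
      omega
    have e2 : i2 * v + (x - sval i2) < v * d := by
      have := aux_pos_lt hv h2.1
      have h2' : i2 * v + v = (i2 + 1) * v := by ring
      have h3 : (i2 + 1) * v ≤ d * v := Nat.mul_le_mul_right v h2.1
      have h4 : d * v = v * d := Nat.mul_comm d v
      omega
    have hq1 : (π ⟨i1 * v + (x - sval i1), e1⟩).1 = x := by
      rw [hform i1 h1.1 _ hj1 e1]; omega
    have hq2 : (π ⟨i2 * v + (x - sval i2), e2⟩).1 = x := by
      rw [hform i2 h2.1 _ hj2 e2]; omega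
    have hpeq : (⟨i1 * v + (x - sval i1), e1⟩ : Fin (v * d)) = ⟨i2 * v + (x - sval i2), e2⟩ :=
      π.injective (Fin.val_injective (by rw [hq1, hq2]))
    have : i1 * v + (x - sval i1) = i2 * v + (x - sval i2) := by
      simpa [Fin.ext_iff] using hpeq
    exact hne (aux_blk_eq hj1 hj2 this).1
  have hcard : s = T.card * v := by
    have := congrArg Finset.card hunion
    rw [Finset.card_range, Finset.card_biUnion hdisj] at this
    rw [this]
    rw [Finset.sum_congr rfl (fun i' _ => by rw [Nat.card_Ico]; omega : ∀ i' ∈ T, (Finset.Ico (sval i') (sval i' + v)).card = v)]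
    rw [Finset.sum_const, smul_eq_mul, Nat.mul_comm]
  refine ⟨T.card, ?_, ?_⟩
  · have : T.card * v < d * v := by rw [← hcard, Nat.mul_comm d v]; exact hslt
    exact Nat.lt_of_mul_lt_mul_right this
  · intro j hj h
    rw [hform i hi j hj h, ← hcard]
end

section
/- For v ≥ 4 and d ≥ 1, the number of diamond permutations of type (v,d) avoiding both 132 and 213 equals 2^{d-1}. -/
/-!
A permutation avoids `132` and `213` exactly when it is reverse layered: a decreasing sequence
of increasing runs of consecutive values. Such a permutation is determined by the set of
positions where its runs start, i.e. by its descent set, and every set of positions occurs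
(sort the positions by run, last run first). It is a diamond permutation exactly when every run
starts at a block boundary: a descent inside a block would put a value below the first entry of
that block, while without such descents every block is increasing. Hence the permutations
counted correspond to the subsets of the `d - 1` inner block boundaries.
-/

open Finset Function Equiv

namespace Equiv.Perm

variable {n : ℕ}

theorem eq_of_lt_iff_lt {π σ : Perm (Fin n)} (h : ∀ p q, π p < π q ↔ σ p < σ q) : π = σ := by
  let e : Fin n ≃o Fin n :=
    { π.symm.trans σ with
      map_rel_iff' := fun {a b} => by
        simp only [Equiv.trans_apply, ← not_lt, ← h, apply_symm_apply] }
  refine Equiv.ext fun x => ?_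
  simpa [e] using (congrArg (· (π x)) (Subsingleton.elim e (OrderIso.refl _))).symm

theorem exists_lt_iff_lt_of_injective {α : Type*} [LinearOrder α] {f : Fin n → α}
    (hf : Injective f) : ∃ π : Perm (Fin n), ∀ p q, π p < π q ↔ f p < f q := by
  have hsort : StrictMono (f ∘ Tuple.sort f) :=
    (Tuple.monotone_sort f).strictMono_of_injective (hf.comp (Tuple.sort f).injective)
  exact ⟨(Tuple.sort f).symm, fun p q => by
    simpa using (hsort.lt_iff_lt (a := (Tuple.sort f).symm p) (b := (Tuple.sort f).symm q)).symm⟩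

end Equiv.Perm

section ReverseLayered

variable {n : ℕ}

open Classical in
/-- The positions `q` that end a descent, i.e. with `π q < π (q - 1)`; this indexing makes
the descent set of a reverse layered permutation the set of first positions of its layers. -/
noncomputable def descentSet (π : Perm (Fin n)) : Finset (Fin n) :=
  {q | ∃ p : Fin n, p.1 + 1 = q.1 ∧ π q < π p}

/-- `π` is the skew sum of increasing runs, a new run starting at each position of `S`. -/
def IsReverseLayered (S : Finset (Fin n)) (π : Perm (Fin n)) : Prop :=
  ∀ p q, p < q → (π p < π q ↔ Disjoint S (Ioc p q))

theorem lt_of_notMem_descentSet {π : Perm (Fin n)} {p q : Fin n} (hq : q ∉ descentSet π)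
    (hpq : p.1 + 1 = q.1) : π p < π q := by
  have hne : π p ≠ π q := π.injective.ne (Fin.ne_of_val_ne (by omega))
  simp only [descentSet, mem_filter, mem_univ, true_and, not_exists, not_and, not_lt] at hq
  exact lt_of_le_of_ne (hq p hpq) hne

theorem lt_of_disjoint_descentSet {π : Perm (Fin n)} {p q : Fin n} (hpq : p < q)
    (hdisj : Disjoint (descentSet π) (Ioc p q)) : π p < π q := by
  obtain ⟨k, hk⟩ : ∃ k, p.1 + k + 1 = q.1 := ⟨q.1 - p.1 - 1, by have := Fin.lt_def.1 hpq; omega⟩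
  induction k generalizing q with
  | zero => exact lt_of_notMem_descentSet (disjoint_left.1 hdisj.symm (right_mem_Ioc.2 hpq)) hk
  | succ k ih =>
    have hpk : p.1 + k + 1 < n := by omega
    have hpq' : p < ⟨p.1 + k + 1, hpk⟩ := Fin.mk_lt_mk.2 (by omega)
    have hq'q : ⟨p.1 + k + 1, hpk⟩ ≤ q := Fin.mk_le_mk.2 (by omega)
    refine (ih hpq' (hdisj.mono_right (Ioc_subset_Ioc_right hq'q)) rfl).trans ?_
    exact lt_of_notMem_descentSet (disjoint_left.1 hdisj.symm (right_mem_Ioc.2 hpq)) (by omega)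

theorem disjoint_descentSet_of_lt {π : Perm (Fin n)} (h132 : Avoids132 π) (h213 : Avoids213 π)
    {p q : Fin n} (hlt : π p < π q) : Disjoint (descentSet π) (Ioc p q) := by
  refine disjoint_left.2 fun r hr hrpq => ?_
  obtain ⟨r', hr'r, hdesc⟩ : ∃ r' : Fin n, r'.1 + 1 = r.1 ∧ π r < π r' := by
    simpa [descentSet] using hr
  obtain ⟨hpr, hrq⟩ := mem_Ioc.1 hrpq
  rcases lt_or_gt_of_ne (π.injective.ne hpr.ne) with hpr' | hrp'
  · have hpr'' : p < r' := by
      refine lt_of_le_of_ne (Fin.le_def.2 (by have := Fin.lt_def.1 hpr; omega)) ?_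
      rintro rfl
      exact lt_asymm hpr' hdesc
    exact h132 ⟨p, r', r, hpr'', Fin.lt_def.2 (by omega), hpr', hdesc⟩
  · have hrq' : r < q := lt_of_le_of_ne hrq (by rintro rfl; exact lt_asymm hlt hrp')
    exact h213 ⟨p, r, q, hpr, hrq', hrp', hlt⟩

theorem isReverseLayered_descentSet {π : Perm (Fin n)} (h132 : Avoids132 π)
    (h213 : Avoids213 π) : IsReverseLayered (descentSet π) π :=
  fun _ _ hpq => ⟨disjoint_descentSet_of_lt h132 h213, lt_of_disjoint_descentSet hpq⟩

namespace IsReverseLayered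

variable {S : Finset (Fin n)} {π : Perm (Fin n)}

theorem avoids132 (h : IsReverseLayered S π) : Avoids132 π := by
  rintro ⟨i, j, k, hij, hjk, hik, hkj⟩
  have hdisj := (h i k (hij.trans hjk)).1 hik
  exact lt_asymm hkj ((h j k hjk).2 (hdisj.mono_right (Ioc_subset_Ioc_left hij.le)))

theorem avoids213 (h : IsReverseLayered S π) : Avoids213 π := by
  rintro ⟨i, j, k, hij, hjk, hji, hik⟩
  have hdisj := (h i k (hij.trans hjk)).1 hik
  exact lt_asymm hji ((h i j hij).2 (hdisj.mono_right (Ioc_subset_Ioc_right hjk.le)))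

theorem le_of_disjoint (h : IsReverseLayered S π) {p q : Fin n} (hpq : p ≤ q)
    (hdisj : Disjoint S (Ioc p q)) : π p ≤ π q := by
  rcases hpq.lt_or_eq with hpq | rfl
  · exact ((h p q hpq).2 hdisj).le
  · exact le_rfl

theorem descentSet_eq (h : IsReverseLayered S π) (hS : ∀ s ∈ S, s.1 ≠ 0) :
    descentSet π = S := by
  ext q
  simp only [descentSet, mem_filter, mem_univ, true_and]
  constructor
  · rintro ⟨p, hpq, hlt⟩
    have hp : p < q := Fin.lt_def.2 (by omega)
    obtain ⟨s, hsS, hs⟩ := not_disjoint_iff.1 (mt (h p q hp).2 (lt_asymm hlt))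
    obtain ⟨hps, hsq⟩ := mem_Ioc.1 hs
    rwa [show q = s from Fin.ext (by have := Fin.lt_def.1 hps; have := Fin.le_def.1 hsq; omega)]
  · intro hq
    have hq0 := hS q hq
    have hp : (⟨q.1 - 1, by omega⟩ : Fin n) < q := Fin.mk_lt_mk.2 (by omega)
    refine ⟨_, Nat.sub_add_cancel (Nat.pos_of_ne_zero hq0),
      lt_of_le_of_ne ?_ (π.injective.ne hp.ne')⟩
    exact not_lt.1 fun hlt => disjoint_left.1 ((h _ q hp).1 hlt) hq (right_mem_Ioc.2 hp)

theorem eq (hπ : IsReverseLayered S π) {σ : Perm (Fin n)} (hσ : IsReverseLayered S σ) :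
    π = σ := by
  refine Perm.eq_of_lt_iff_lt fun p q => ?_
  rcases lt_trichotomy p q with hpq | rfl | hqp
  · exact (hπ p q hpq).trans (hσ p q hpq).symm
  · simp
  · rw [← (π.injective.ne hqp.ne').le_iff_lt, ← (σ.injective.ne hqp.ne').le_iff_lt, ← not_lt,
      ← not_lt, hπ q p hqp, hσ q p hqp]

end IsReverseLayered

theorem card_filter_le_add_card_filter_mem_Ioc {α : Type*} [LinearOrder α] [LocallyFiniteOrder α]
    (S : Finset α) {p q : α} (hpq : p ≤ q) :
    #{s ∈ S | s ≤ q} = #{s ∈ S | s ≤ p} + #{s ∈ S | s ∈ Ioc p q} := by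
  rw [← card_union_of_disjoint (disjoint_filter.2 fun s _ hsp hs => (mem_Ioc.1 hs).1.not_ge hsp),
    ← filter_or]
  congr 1
  refine filter_congr fun s _ => ?_
  rw [mem_Ioc]
  constructor
  · intro hsq
    exact (le_or_gt s p).imp_right fun hps => ⟨hps, hsq⟩
  · rintro (hsp | ⟨-, hsq⟩)
    · exact hsp.trans hpq
    · exact hsq

/-- Sorting positions by this key lists the layers of the reverse layered permutation with
layer starts `S` from last to first, each in increasing order. -/
def layerKey (S : Finset (Fin n)) (p : Fin n) : ℤ :=
  p.1 - n * #{s ∈ S | s ≤ p}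

theorem layerKey_sub_layerKey (S : Finset (Fin n)) {p q : Fin n} (hpq : p ≤ q) :
    layerKey S q - layerKey S p = (q.1 - p.1 : ℤ) - n * #{s ∈ S | s ∈ Ioc p q} := by
  rw [layerKey, layerKey, card_filter_le_add_card_filter_mem_Ioc S hpq]
  push_cast
  ring

variable {S : Finset (Fin n)} {p q : Fin n}

theorem layerKey_lt_layerKey_of_disjoint (hpq : p < q) (hdisj : Disjoint S (Ioc p q)) :
    layerKey S p < layerKey S q := by
  have hdiff := layerKey_sub_layerKey S hpq.le
  rw [card_eq_zero.2 (filter_eq_empty_iff.2 fun s hs => disjoint_left.1 hdisj hs)] at hdiff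
  have := Fin.lt_def.1 hpq
  push_cast at hdiff
  omega

theorem layerKey_lt_layerKey_of_not_disjoint (hpq : p < q) (hdisj : ¬Disjoint S (Ioc p q)) :
    layerKey S q < layerKey S p := by
  have hdiff := layerKey_sub_layerKey S hpq.le
  have hpos : 0 < #{s ∈ S | s ∈ Ioc p q} := by
    obtain ⟨s, hsS, hs⟩ := not_disjoint_iff.1 hdisj
    exact card_pos.2 ⟨s, mem_filter.2 ⟨hsS, hs⟩⟩
  have : (n : ℤ) ≤ n * #{s ∈ S | s ∈ Ioc p q} :=
    le_mul_of_one_le_right (by positivity) (by exact_mod_cast hpos)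
  have := q.2
  omega

theorem layerKey_lt_layerKey_iff (hpq : p < q) :
    layerKey S p < layerKey S q ↔ Disjoint S (Ioc p q) :=
  ⟨fun h => by_contra fun hdisj => lt_asymm h (layerKey_lt_layerKey_of_not_disjoint hpq hdisj),
    layerKey_lt_layerKey_of_disjoint hpq⟩

theorem layerKey_injective : Injective (layerKey S) := by
  refine Injective.of_lt_imp_ne fun p q hpq => ?_
  by_cases hdisj : Disjoint S (Ioc p q)
  · exact (layerKey_lt_layerKey_of_disjoint hpq hdisj).ne
  · exact (layerKey_lt_layerKey_of_not_disjoint hpq hdisj).ne'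

theorem exists_isReverseLayered (S : Finset (Fin n)) : ∃ π, IsReverseLayered S π := by
  obtain ⟨π, hπ⟩ := Perm.exists_lt_iff_lt_of_injective layerKey_injective
  exact ⟨π, fun p q hpq => (hπ p q).trans (layerKey_lt_layerKey_iff hpq)⟩

end ReverseLayered

namespace IsReverseLayered

variable {v d : ℕ} {S : Finset (Fin (v * d))} {π : Perm (Fin (v * d))}

theorem dvd_of_isDiamond (h : IsReverseLayered S π) (hπ : IsDiamond v d π) {s : Fin (v * d)}
    (hs : s ∈ S) : v ∣ s.1 := by
  have hv : 0 < v := Nat.pos_of_mul_pos_right (Fin.pos s)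
  have hsd : s.1 / v < d := Nat.div_lt_of_lt_mul s.2
  have hsplit : s.1 / v * v + s.1 % v = s.1 := Nat.div_add_mod' s.1 v
  have hblockEnd : (s.1 / v + 1) * v ≤ v * d := by nlinarith
  by_contra hndvd
  have hmod : s.1 % v ≠ 0 := fun h0 => hndvd (Nat.dvd_of_mod_eq_zero h0)
  let b : Fin (v * d) := ⟨s.1 / v * v, by omega⟩
  have hbs : b < s := Fin.lt_def.2 (by simp only [b]; omega)
  have hle : π b ≤ π s := by
    simpa only [hsplit] using (hπ (s.1 / v) hsd (s.1 % v) (Nat.mod_lt _ hv) b.2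
      (by omega) (by rw [add_mul] at hblockEnd; omega)).1
  have hnlt : ¬π b < π s := fun hlt => disjoint_left.1 ((h b s hbs).1 hlt) hs (right_mem_Ioc.2 hbs)
  exact hbs.ne (π.injective (le_antisymm hle (not_lt.1 hnlt)))

theorem isDiamond (h : IsReverseLayered S π) (hS : ∀ s ∈ S, v ∣ s.1) : IsDiamond v d π := by
  intro i hi j hj h0 hj' hl
  have hblock : ∀ a b (ha : a < v * d) (hb : b < v * d), i * v ≤ a → a ≤ b → b < i * v + v →
      π ⟨a, ha⟩ ≤ π ⟨b, hb⟩ := fun a b ha hb hia hab hbi =>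
    h.le_of_disjoint (Fin.mk_le_mk.2 hab) <| disjoint_left.2 fun s hsS hs => by
      have has : a < s.1 := (mem_Ioc.1 hs).1
      have hsb : s.1 ≤ b := (mem_Ioc.1 hs).2
      have := Nat.mul_comm v i
      exact Nat.not_dvd_of_lt_of_lt_mul_succ (k := i) (by omega) (by rw [Nat.mul_succ]; omega)
        (hS s hsS)
  exact ⟨hblock _ _ _ _ le_rfl (by omega) (by omega),
    hblock _ _ _ _ (by omega) (by omega) (by omega)⟩

end IsReverseLayered

section BlockBoundaries

variable {v d : ℕ}

variable (v d) in
def blockBoundaries : Finset (Fin (v * d)) :=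
  {s | s.1 ≠ 0 ∧ v ∣ s.1}

theorem mem_blockBoundaries {s : Fin (v * d)} : s ∈ blockBoundaries v d ↔ s.1 ≠ 0 ∧ v ∣ s.1 := by
  simp [blockBoundaries]

theorem card_blockBoundaries (hv : 0 < v) : #(blockBoundaries v d) = d - 1 := by
  have hval : (blockBoundaries v d).map Fin.valEmbedding = {x ∈ Ioc 0 (v * d - 1) | v ∣ x} := by
    ext x
    simp only [mem_map, mem_blockBoundaries, Fin.valEmbedding_apply, mem_filter, mem_Ioc]
    constructor
    · rintro ⟨s, ⟨hs0, hsv⟩, rfl⟩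
      exact ⟨⟨by omega, by omega⟩, hsv⟩
    · rintro ⟨⟨hx0, hx⟩, hxv⟩
      exact ⟨⟨x, by omega⟩, ⟨hx0.ne', hxv⟩, rfl⟩
  rw [← card_map, hval, Nat.Ioc_filter_dvd_card_eq_div]
  rcases d with _ | d
  · simp
  · refine Nat.div_eq_of_lt_le ?_ ?_ <;>
      simp only [Nat.add_sub_cancel, Nat.mul_succ, Nat.succ_mul, Nat.mul_comm d v] <;> omega

theorem descentSet_subset_blockBoundaries {π : Perm (Fin (v * d))} (hπ : IsDiamond v d π)
    (h132 : Avoids132 π) (h213 : Avoids213 π) : descentSet π ⊆ blockBoundaries v d := by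
  intro s hs
  obtain ⟨p, hps, -⟩ : ∃ p : Fin (v * d), p.1 + 1 = s.1 ∧ π s < π p := by
    simpa [descentSet] using hs
  exact mem_blockBoundaries.2
    ⟨by omega, (isReverseLayered_descentSet h132 h213).dvd_of_isDiamond hπ hs⟩

end BlockBoundaries

noncomputable def diamondAvoiderEquiv (v d : ℕ) :
    {π : Perm (Fin (v * d)) // IsDiamond v d π ∧ Avoids132 π ∧ Avoids213 π} ≃
      (blockBoundaries v d).powerset := by
  refine Equiv.ofBijective (fun π => ⟨descentSet π.1, mem_powerset.2
    (descentSet_subset_blockBoundaries π.2.1 π.2.2.1 π.2.2.2)⟩) ⟨fun π σ hπσ => ?_, fun S => ?_⟩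
  · have hσ := isReverseLayered_descentSet σ.2.2.1 σ.2.2.2
    rw [← show descentSet π.1 = descentSet σ.1 from congrArg Subtype.val hπσ] at hσ
    exact Subtype.ext ((isReverseLayered_descentSet π.2.2.1 π.2.2.2).eq hσ)
  · obtain ⟨π, hπ⟩ := exists_isReverseLayered S.1
    have hS s (hs : s ∈ S.1) := mem_blockBoundaries.1 (mem_powerset.1 S.2 hs)
    exact ⟨⟨π, hπ.isDiamond fun s hs => (hS s hs).2, hπ.avoids132, hπ.avoids213⟩,
      Subtype.ext (hπ.descentSet_eq fun s hs => (hS s hs).1)⟩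

theorem avoids132_213_count_general (v d : ℕ) (hv : 4 ≤ v) :
    Nat.card {π : Equiv.Perm (Fin (v * d)) // IsDiamond v d π ∧ Avoids132 π ∧ Avoids213 π} =
      2 ^ (d - 1) := by
  rw [Nat.card_congr (diamondAvoiderEquiv v d), Nat.card_eq_fintype_card, Fintype.card_coe,
    card_powerset, card_blockBoundaries (d := d) (by omega)]

theorem avoids132_213_count (v d : ℕ) (hv : 4 ≤ v) (hd : 1 ≤ d) :
    Nat.card {π : Equiv.Perm (Fin (v * d)) // IsDiamond v d π ∧ Avoids132 π ∧ Avoids213 π} =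
      2 ^ (d - 1) :=
  avoids132_213_count_general v d hv
end

section
/- For v ≥ 4 and d ≥ 1, the number of diamond permutations of type (v,d) avoiding both 132 and 213 with exactly k descents equals binomial(d-1, k) for 0 ≤ k ≤ d-1 and is 0 otherwise; equivalently, the generating function for descents over these permutations is (1+x)^{d-1}. -/
namespace DP

/-- start of the run containing block `b` (breaks in `S`: break between block `s` and `s+1`). -/
def sr (S : Finset ℕ) : ℕ → ℕ
  | 0 => 0
  | b+1 => if b ∈ S then b+1 else sr S b

lemma sr_le (S : Finset ℕ) : ∀ b, sr S b ≤ b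
  | 0 => le_rfl
  | b+1 => by unfold sr; split
              · exact le_rfl
              · exact (sr_le S b).trans (Nat.le_succ b)

lemma sr_break (S : Finset ℕ) : ∀ b m, sr S b ≤ m → m < b → m ∉ S
  | 0, m, h1, h2 => absurd h2 (Nat.not_lt_zero m)
  | b+1, m, h1, h2 => by
      unfold sr at h1; split at h1
      · omega
      · rcases Nat.lt_or_ge m b with h | h
        · exact sr_break S b m h1 h
        · have : m = b := by omega
          subst this; assumption

lemma sr_start (S : Finset ℕ) : ∀ b, sr S b ≠ 0 → sr S b - 1 ∈ S
  | 0 => by intro h; exact absurd rfl h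
  | b+1 => by
      intro h
      by_cases hb : b ∈ S
      · simpa [sr, hb] using hb
      · rw [show sr S (b+1) = sr S b from by simp [sr, hb]] at *
        exact sr_start S b h

lemma sr_eq (S : Finset ℕ) (b a : ℕ) (hab : a ≤ b)
    (hnb : ∀ m, a ≤ m → m < b → m ∉ S) (hst : a = 0 ∨ (a ≠ 0 ∧ a - 1 ∈ S)) :
    sr S b = a := by
  induction b with
  | zero =>
    have : a = 0 := by omega
    subst this; rfl
  | succ b ih =>
    unfold sr; split
    · rename_i hb
      rcases Nat.lt_or_ge a (b+1) with h | h
      · exact absurd hb (hnb b (by omega) (by omega))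
      · omega
    · rename_i hb
      rcases Nat.lt_or_ge a (b+1) with h | h
      · exact ih (by omega) (fun m h1 h2 => hnb m h1 (by omega))
      · -- a = b+1, but then a-1 = b ∈ S contradiction
        have ha : a = b + 1 := by omega
        rcases hst with h0 | ⟨h1, h2⟩
        · omega
        · exact absurd (show b ∈ S by rw [show b = a - 1 by omega]; exact h2) hb

lemma sr_mono (S : Finset ℕ) {b b' : ℕ} (h : b ≤ b') : sr S b ≤ sr S b' := by
  by_contra hc
  push_neg at hc
  have h1 : sr S b ≠ 0 := by omega
  have h2 := sr_start S b h1
  exact sr_break S b' (sr S b - 1) (by omega) (by have := sr_le S b; omega) h2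

lemma sr_same (S : Finset ℕ) {b b' : ℕ} (h1 : b ≤ b') (h2 : sr S b' ≤ b) :
    sr S b = sr S b' := by
  refine sr_eq S b (sr S b') h2 (fun m hm1 hm2 => sr_break S b' m hm1 (by omega)) ?_
  rcases Nat.eq_zero_or_pos (sr S b') with h | h
  · exact Or.inl h
  · exact Or.inr ⟨by omega, sr_start S b' (by omega)⟩

/-- end of the run containing block `b`, with `d` blocks total. -/
def erGo (S : Finset ℕ) : ℕ → ℕ → ℕ
  | 0, b => b
  | f+1, b => if b ∈ S then b else erGo S f (b+1)

def er (S : Finset ℕ) (d b : ℕ) : ℕ := erGo S (d - 1 - b) b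

lemma erGo_ge (S : Finset ℕ) : ∀ f b, b ≤ erGo S f b
  | 0, b => le_rfl
  | f+1, b => by unfold erGo; split
                 · exact le_rfl
                 · exact (Nat.le_succ b).trans (erGo_ge S f (b+1))

lemma erGo_le (S : Finset ℕ) : ∀ f b, erGo S f b ≤ b + f
  | 0, b => le_rfl
  | f+1, b => by unfold erGo; split
                 · omega
                 · have := erGo_le S f (b+1); omega

lemma erGo_break (S : Finset ℕ) : ∀ f b m, b ≤ m → m < erGo S f b → m ∉ S
  | 0, b, m, h1, h2 => by unfold erGo at h2; omega
  | f+1, b, m, h1, h2 => by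
      unfold erGo at h2; split at h2
      · omega
      · rcases Nat.eq_or_lt_of_le h1 with h | h
        · subst h; assumption
        · exact erGo_break S f (b+1) m h (by omega)

lemma erGo_end (S : Finset ℕ) : ∀ f b, erGo S f b ∈ S ∨ erGo S f b = b + f
  | 0, b => Or.inr rfl
  | f+1, b => by
      unfold erGo; split
      · left; assumption
      · rcases erGo_end S f (b+1) with h | h
        · exact Or.inl h
        · right; omega

lemma er_ge (S : Finset ℕ) (d b : ℕ) : b ≤ er S d b := erGo_ge S _ b
lemma er_le (S : Finset ℕ) (d b : ℕ) (h : b ≤ d - 1) : er S d b ≤ d - 1 := by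
  have := erGo_le S (d - 1 - b) b; unfold er; omega
lemma er_break (S : Finset ℕ) (d b m : ℕ) (h1 : b ≤ m) (h2 : m < er S d b) : m ∉ S :=
  erGo_break S _ b m h1 h2
lemma er_end (S : Finset ℕ) (d b : ℕ) (h : b ≤ d - 1) : er S d b ∈ S ∨ er S d b = d - 1 := by
  rcases erGo_end S (d - 1 - b) b with h' | h'
  · exact Or.inl h'
  · right; unfold er; omega

lemma er_eq (S : Finset ℕ) (d b e : ℕ) (hb : b ≤ d - 1) (hbe : b ≤ e) (hed : e ≤ d - 1)
    (hnb : ∀ m, b ≤ m → m < e → m ∉ S) (hend : e ∈ S ∨ e = d - 1) :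
    er S d b = e := by
  rcases Nat.lt_trichotomy (er S d b) e with h | h | h
  · have h1 : er S d b ∈ S := by
      rcases er_end S d b hb with h' | h' <;> [exact h'; omega]
    exact absurd h1 (hnb _ (er_ge S d b) h)
  · exact h
  · have h1 : e ∈ S := by
      rcases hend with h' | h' <;> [exact h'; (exact absurd h' (by have := er_le S d b hb; omega))]
    exact absurd h1 (er_break S d b e hbe h)

/-- blocks in the same run have the same run data. -/
lemma same_run (S : Finset ℕ) (d : ℕ) {b b' : ℕ} (hb' : b' ≤ d - 1)
    (h1 : b ≤ b') (h2 : sr S b' ≤ b) : er S d b = er S d b' := by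
  refine er_eq S d b (er S d b') (by omega) (h1.trans (er_ge S d b')) (er_le S d b' hb')
    (fun m hm1 hm2 => ?_) (er_end S d b' hb')
  rcases Nat.lt_or_ge m b' with h | h
  · exact sr_break S b' m (by omega) h
  · exact er_break S d b' m h hm2

/-- different runs are separated. -/
lemma diff_run (S : Finset ℕ) (d : ℕ) {b b' : ℕ} (h1 : b ≤ b') (h2 : b < sr S b') :
    er S d b < sr S b' := by
  by_contra hc
  push_neg at hc
  have h3 : sr S b' ≠ 0 := by omega
  exact er_break S d b (sr S b' - 1) (by omega) (by omega) (sr_start S b' h3)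


section Perm

variable (v d : ℕ) (S : Finset ℕ)

/-- the value of the skew-sum permutation determined by break set `S` at position `p`. -/
def F (p : ℕ) : ℕ := (p - v * sr S (p / v)) + v * (d - 1 - er S d (p / v))

lemma block_facts (hv : 0 < v) {p : ℕ} (hp : p < v * d) :
    p / v < d ∧ v * (p / v) ≤ p ∧ p < v * (p / v) + v := by
  have hm := Nat.div_add_mod p v
  have hlt := Nat.mod_lt p hv
  refine ⟨?_, by omega, by omega⟩
  by_contra hc
  push_neg at hc
  have : v * d ≤ v * (p / v) := Nat.mul_le_mul_left v hc
  omega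

lemma mul_sub_fact {e : ℕ} (he : e ≤ d - 1) (hd : 1 ≤ d) :
    v * (d - 1 - e) + v * (e + 1) = v * d := by
  rw [← Nat.mul_add]; congr 1; omega

lemma mul_sub_fact2 {s : ℕ} (hs : s ≤ d) :
    v * (d - s) + v * s = v * d := by
  rw [← Nat.mul_add]; congr 1; omega

variable (hv : 0 < v) (hd : 1 ≤ d)
include hv hd

lemma F_lt {p : ℕ} (hp : p < v * d) : F v d S p < v * (d - sr S (p / v)) := by
  obtain ⟨hb, hl, hr⟩ := block_facts v d hv hp
  have ha : sr S (p / v) ≤ p / v := sr_le S (p / v)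
  have hbe : p / v ≤ er S d (p / v) := er_ge S d (p / v)
  have hed : er S d (p / v) ≤ d - 1 := er_le S d (p / v) (by omega)
  have k1 := mul_sub_fact v d hed hd
  have k2 := mul_sub_fact2 v d (show sr S (p / v) ≤ d by omega)
  have k3 : v * (p / v + 1) ≤ v * (er S d (p / v) + 1) := Nat.mul_le_mul_left v (by omega)
  have k4 : v * sr S (p / v) ≤ v * (p / v) := Nat.mul_le_mul_left v ha
  have k5 : v * (p / v + 1) = v * (p / v) + v := by ring
  unfold F
  omega

omit hv hd in
lemma F_ge (p : ℕ) :
    v * (d - 1 - er S d (p / v)) ≤ F v d S p := by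
  unfold F; omega

lemma F_lt_n {p : ℕ} (hp : p < v * d) : F v d S p < v * d := by
  have h := F_lt v d S hv hd hp
  have : v * (d - sr S (p / v)) ≤ v * d := Nat.mul_le_mul_left v (by omega)
  omega

lemma F_inj_aux {p q : ℕ} (hp : p < v * d) (hq : q < v * d)
    (hbc : p / v ≤ q / v) (h : F v d S p = F v d S q) : p = q := by
  obtain ⟨hb, hl, hr⟩ := block_facts v d hv hp
  obtain ⟨hb', hl', hr'⟩ := block_facts v d hv hq
  rcases Nat.lt_or_ge (p / v) (sr S (q / v)) with hdiff | hsame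
  · -- different runs: contradiction
    exfalso
    have h1 : er S d (p / v) < sr S (q / v) := diff_run S d hbc hdiff
    have h2 := F_lt v d S hv hd hq
    have h3 := F_ge v d S p
    have hed : er S d (p / v) ≤ d - 1 := er_le S d (p / v) (by omega)
    have hsc : sr S (q / v) ≤ q / v := sr_le S (q / v)
    have h4 : v * (d - sr S (q / v)) ≤ v * (d - 1 - er S d (p / v)) :=
      Nat.mul_le_mul_left v (by omega)
    omega
  · -- same run
    have h1 : sr S (p / v) = sr S (q / v) := sr_same S hbc hsame
    have h2 : er S d (p / v) = er S d (q / v) := same_run S d (by omega) hbc hsame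
    have k4 : v * sr S (p / v) ≤ v * (p / v) := Nat.mul_le_mul_left v (sr_le S (p / v))
    have k4' : v * sr S (q / v) ≤ v * (q / v) := Nat.mul_le_mul_left v (sr_le S (q / v))
    unfold F at h
    rw [h1] at k4
    rw [h1, h2] at h
    omega

lemma F_inj {p q : ℕ} (hp : p < v * d) (hq : q < v * d)
    (h : F v d S p = F v d S q) : p = q := by
  rcases Nat.le_total (p / v) (q / v) with hbc | hbc
  · exact F_inj_aux v d S hv hd hp hq hbc h
  · exact (F_inj_aux v d S hv hd hq hp hbc h.symm).symm

/-- the skew-sum permutation determined by break set `S`. -/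
noncomputable def Fperm : Equiv.Perm (Fin (v * d)) :=
  Equiv.ofBijective (fun p : Fin (v * d) => ⟨F v d S p.1, F_lt_n v d S hv hd p.2⟩)
    (Finite.injective_iff_bijective.mp (fun p q h => by
      apply Fin.ext
      exact F_inj v d S hv hd p.2 q.2 (by simpa [Fin.ext_iff] using h)))

@[simp] lemma Fperm_apply (p : Fin (v * d)) :
    (Fperm v d S hv hd p : ℕ) = F v d S p.1 := rfl

omit hv hd in
lemma F_run {p q : ℕ} (hq : q < v * d) (hpq : p ≤ q)
    (hsame : sr S (q / v) ≤ p / v) : F v d S q = F v d S p + (q - p) := by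
  have hbc : p / v ≤ q / v := Nat.div_le_div_right hpq
  have h1 : sr S (p / v) = sr S (q / v) := sr_same S hbc hsame
  have hq' : q / v < d := by
    have hm := Nat.div_add_mod q v
    by_contra hc
    push_neg at hc
    have : v * d ≤ v * (q / v) := Nat.mul_le_mul_left v hc
    have : v * (q / v) ≤ q := Nat.mul_div_le q v
    omega
  have h2 : er S d (p / v) = er S d (q / v) := same_run S d (by omega) hbc hsame
  have k4 : v * sr S (p / v) ≤ v * (p / v) := Nat.mul_le_mul_left v (sr_le S (p / v))
  have k5 : v * (p / v) ≤ p := Nat.mul_div_le p v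
  unfold F
  rw [h1, h2] at *
  omega

lemma F_sep {p q : ℕ} (hp : p < v * d) (hq : q < v * d)
    (hdiff : p / v < sr S (q / v)) : F v d S q < F v d S p := by
  have hbc : p / v ≤ q / v := le_trans (by omega) ((sr_le S (q / v)).trans le_rfl)
  obtain ⟨hb, hl, hr⟩ := block_facts v d hv hp
  obtain ⟨hb', hl', hr'⟩ := block_facts v d hv hq
  have h1 : er S d (p / v) < sr S (q / v) := diff_run S d hbc hdiff
  have h2 := F_lt v d S hv hd hq
  have h3 := F_ge v d S p
  have hed : er S d (p / v) ≤ d - 1 := er_le S d (p / v) (by omega)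
  have hsc : sr S (q / v) ≤ q / v := sr_le S (q / v)
  have h4 : v * (d - sr S (q / v)) ≤ v * (d - 1 - er S d (p / v)) :=
    Nat.mul_le_mul_left v (by omega)
  omega

/-- the order characterization predicate for skew sums of increasing runs. -/
def Ch {n : ℕ} (π : Equiv.Perm (Fin n)) : Prop :=
  ∀ p q : Fin n, (p : ℕ) < q → π p < π q → (π q : ℕ) = (π p : ℕ) + ((q : ℕ) - p)

lemma ch_Fperm : Ch (Fperm v d S hv hd) := by
  intro p q hpq hlt
  have hlt' : F v d S p.1 < F v d S q.1 := hlt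
  have hbc : p.1 / v ≤ q.1 / v := Nat.div_le_div_right (le_of_lt hpq)
  rcases Nat.lt_or_ge (p.1 / v) (sr S (q.1 / v)) with hdiff | hsame
  · exact absurd (F_sep v d S hv hd p.2 q.2 hdiff) (by omega)
  · exact F_run v d S q.2 (le_of_lt hpq) hsame

omit hv hd in
lemma avoids_of_ch {n : ℕ} (π : Equiv.Perm (Fin n)) (h : Ch π) :
    Avoids132 π ∧ Avoids213 π := by
  constructor
  · rintro ⟨i, j, k, hij, hjk, h1, h2⟩
    have hik : π i < π k := h1
    have hij' : π i < π j := lt_trans h1 h2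
    have e1 := h i j hij hij'
    have e2 := h i k (lt_trans hij hjk) hik
    have : (π k : ℕ) < π j := h2
    have hij2 : (i : ℕ) < j := hij
    have hjk2 : (j : ℕ) < k := hjk
    omega
  · rintro ⟨i, j, k, hij, hjk, h1, h2⟩
    have e1 := h i k (lt_trans hij hjk) h2
    have e2 := h j k hjk (lt_trans h1 h2)
    have : (π j : ℕ) < π i := h1
    have hij2 : (i : ℕ) < j := hij
    have hjk2 : (j : ℕ) < k := hjk
    omega

lemma diamond_Fperm : IsDiamond v d (Fperm v d S hv hd) := by
  intro i hi j hj h0 hjlt hl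
  have hdiv : ∀ r, r < v → (i * v + r) / v = i := by
    intro r hr
    rw [mul_comm, Nat.mul_add_div hv, Nat.div_eq_of_lt hr]; omega
  have key : ∀ r, r < v → ∀ (hr : i * v + r < v * d),
      F v d S (i * v + r) = F v d S (i * v) + r := by
    intro r hr hrlt
    have := F_run v d S hrlt (Nat.le_add_right _ _)
      (by rw [hdiv r hr, Nat.mul_div_cancel _ hv]; exact sr_le S i)
    simpa using this
  constructor
  · show F v d S (i * v) ≤ F v d S (i * v + j)
    rw [key j hj hjlt]; omega
  · show F v d S (i * v + j) ≤ F v d S (i * v + (v - 1))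
    rw [key j hj hjlt, key (v - 1) (by omega) hl]; omega

/-- descent criterion for `Fperm`. -/
lemma descent_Fperm_iff {i : ℕ} (hi : i < v * d) (hi1 : i + 1 < v * d) :
    F v d S (i + 1) < F v d S i ↔ (i / v ∈ S ∧ i + 1 = v * (i / v + 1)) := by
  obtain ⟨hb, hl, hr⟩ := block_facts v d hv hi
  constructor
  · intro hdes
    rcases Nat.lt_or_ge (i + 1) (v * (i / v) + v) with hcase | hcase
    · -- same block: ascent, contradiction
      exfalso
      have hdiv : (i + 1) / v = i / v := by
        apply Nat.div_eq_of_lt_le (by rw [mul_comm]; omega) (by rw [Nat.succ_mul, mul_comm]; omega)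
      have := F_run v d S hi1 (Nat.le_succ i) (by rw [hdiv]; exact sr_le S (i / v))
      omega
    · have hieq : i + 1 = v * (i / v + 1) := by
        have : v * (i / v + 1) = v * (i / v) + v := by ring
        omega
      have hdiv : (i + 1) / v = i / v + 1 := by
        rw [hieq, Nat.mul_div_cancel_left _ hv]
      by_cases hmem : i / v ∈ S
      · exact ⟨hmem, hieq⟩
      · exfalso
        have hsr : sr S (i / v + 1) = sr S (i / v) := by simp [sr, hmem]
        have := F_run v d S hi1 (Nat.le_succ i)
          (by rw [hdiv, hsr]; exact sr_le S (i / v))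
        omega
  · rintro ⟨hmem, hieq⟩
    have hdiv : (i + 1) / v = i / v + 1 := by
      rw [hieq, Nat.mul_div_cancel_left _ hv]
    have hsr : sr S (i / v + 1) = i / v + 1 := by simp [sr, hmem]
    exact F_sep v d S hv hd hi hi1 (by rw [hdiv, hsr]; omega)

omit hv hd in
lemma desNum_eq_filter {n : ℕ} (π : Equiv.Perm (Fin n)) :
    desNum π = (Finset.univ.filter
      (fun i : Fin n => ∃ h : i.1 + 1 < n, π ⟨i.1 + 1, h⟩ < π i)).card := by
  classical
  rw [desNum, Nat.card_eq_fintype_card, Fintype.card_subtype]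

lemma desNum_Fperm (hS : S ⊆ Finset.range (d - 1)) :
    desNum (Fperm v d S hv hd) = S.card := by
  classical
  rw [desNum_eq_filter]
  have hmul : v * (d - 1) + v = v * d := by rw [← Nat.mul_succ]; congr 1; omega
  refine Finset.card_bij' (fun (a : Fin (v * d)) _ => a.1 / v)
    (fun s hs => (⟨v * (s + 1) - 1, by
      have h1 : s < d - 1 := Finset.mem_range.mp (hS hs)
      have h2 : v * (s + 1) ≤ v * (d - 1) := Nat.mul_le_mul_left v (by omega)
      omega⟩ : Fin (v * d))) ?_ ?_ ?_ ?_
  · intro a ha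
    simp only [Finset.mem_filter] at ha
    obtain ⟨-, h, hdes⟩ := ha
    exact ((descent_Fperm_iff v d S hv hd a.2 h).mp hdes).1
  · intro s hs
    have hsd : s < d - 1 := Finset.mem_range.mp (hS hs)
    have hb : v * (s + 1) ≤ v * (d - 1) := Nat.mul_le_mul_left v (by omega)
    simp only [Finset.mem_filter, Finset.mem_univ, true_and]
    have hx : v * (s + 1) - 1 + 1 = v * (s + 1) := by
      have : 0 < v * (s + 1) := Nat.mul_pos hv (by omega)
      omega
    refine ⟨by omega, ?_⟩
    show F v d S (v * (s + 1) - 1 + 1) < F v d S (v * (s + 1) - 1)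
    have hdivx : (v * (s + 1) - 1) / v = s := by
      have hee : v * (s + 1) - 1 = v * s + (v - 1) := by
        have : v * (s + 1) = v * s + v := by ring
        omega
      rw [hee, Nat.mul_add_div hv, Nat.div_eq_of_lt (by omega)]; omega
    rw [descent_Fperm_iff v d S hv hd (by omega) (by omega), hdivx]
    exact ⟨hs, by omega⟩
  · intro a ha
    simp only [Finset.mem_filter] at ha
    obtain ⟨-, h, hdes⟩ := ha
    have := ((descent_Fperm_iff v d S hv hd a.2 h).mp hdes).2
    apply Fin.ext
    simp only
    omega
  · intro s hs
    have hsd : s < d - 1 := Finset.mem_range.mp (hS hs)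
    simp only
    have hee : v * (s + 1) - 1 = v * s + (v - 1) := by
      have : v * (s + 1) = v * s + v := by ring
      omega
    rw [hee, Nat.mul_add_div hv, Nat.div_eq_of_lt (by omega)]; omega

end Perm

/-! ### From pattern avoidance to the characterization -/

section Avoid

variable {n : ℕ} (π : Equiv.Perm (Fin n)) (h132 : Avoids132 π) (h213 : Avoids213 π)
include h132 h213

lemma between {p m q : Fin n} (h1 : p < m) (h2 : m < q) (h3 : π p < π q) :
    π p < π m ∧ π m < π q := by
  constructor
  · rcases lt_trichotomy (π p) (π m) with h | h | h
    · exact h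
    · exact absurd (π.injective h.symm) (by intro hc; subst hc; exact lt_irrefl _ h1)
    · exact absurd ⟨p, m, q, h1, h2, h, h3⟩ h213
  · rcases lt_trichotomy (π m) (π q) with h | h | h
    · exact h
    · exact absurd (π.injective h) (by intro hc; subst hc; exact lt_irrefl _ h2)
    · exact absurd ⟨p, m, q, h1, h2, h3, h⟩ h132

lemma between_val {p q r : Fin n} (h1 : π p < π r) (h2 : π r < π q) (h3 : p < q) :
    p < r ∧ r < q := by
  constructor
  · rcases lt_trichotomy p r with h | h | h
    · exact h
    · subst h; exact absurd h1 (lt_irrefl _)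
    · exact absurd ⟨r, p, q, h, h3, h1, h2⟩ h213
  · rcases lt_trichotomy r q with h | h | h
    · exact h
    · subst h; exact absurd h2 (lt_irrefl _)
    · exact absurd ⟨p, q, r, h3, h, h1, h2⟩ h132

lemma ch_of_avoids : Ch π := by
  intro p q hpq hlt
  have hpq' : p < q := hpq
  have hcard : (Finset.Ioo p q).card = (Finset.Ioo (π p) (π q)).card := by
    apply Finset.card_bij' (i := fun m _ => π m) (j := fun y _ => π.symm y)
    · intro m hm
      rw [Finset.mem_Ioo] at *
      exact between π h132 h213 hm.1 hm.2 hlt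
    · intro y hy
      rw [Finset.mem_Ioo] at *
      refine between_val π h132 h213 ?_ ?_ hpq'
      · simpa using hy.1
      · simpa using hy.2
    · intro m _; simp
    · intro y _; simp
  rw [Fin.card_Ioo, Fin.card_Ioo] at hcard
  have e1 : (p : ℕ) < q := hpq
  have e2 : ((π p : Fin n) : ℕ) < (π q : Fin n) := hlt
  omega

end Avoid

/-! ### Generic counting helpers -/

lemma card_filter_lt_perm {n : ℕ} (π : Equiv.Perm (Fin n)) (x : Fin n) :
    (Finset.univ.filter fun q => π q < π x).card = (π x).1 := by
  classical
  rw [show ((π x).1 : ℕ) = (Finset.Iio (π x)).card from (Fin.card_Iio _).symm]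
  refine Finset.card_bij' (fun q _ => π q) (fun y _ => π.symm y) ?_ ?_ ?_ ?_
  · intro q hq
    simp only [Finset.mem_filter] at hq
    simpa [Finset.mem_Iio] using hq.2
  · intro y hy
    simp only [Finset.mem_Iio] at hy
    simp only [Finset.mem_filter, Finset.mem_univ, true_and]
    simpa using hy
  · intro q _; simp
  · intro y _; simp

lemma card_filter_le_val {n : ℕ} (c : ℕ) :
    ((Finset.univ : Finset (Fin n)).filter fun q => c ≤ q.1).card = n - c := by
  classical
  rw [← Finset.card_range (n - c)]
  refine Finset.card_bij' (fun q _ => q.1 - c) (fun m hm => (⟨m + c, by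
      simp only [Finset.mem_range] at hm; omega⟩ : Fin n)) ?_ ?_ ?_ ?_
  · intro q hq
    simp only [Finset.mem_filter] at hq
    simp only [Finset.mem_range]
    have := q.2
    omega
  · intro m hm
    simp only [Finset.mem_range] at hm
    simp only [Finset.mem_filter, Finset.mem_univ, true_and]
    omega
  · intro q hq
    simp only [Finset.mem_filter] at hq
    apply Fin.ext
    simp only
    omega
  · intro m hm
    simp only [Finset.mem_range] at hm
    simp only
    omega

/-! ### Uniqueness: a diamond {132,213}-avoiding permutation is an `Fperm` -/

section Unique

variable (v d : ℕ) (π : Equiv.Perm (Fin (v * d)))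

open Classical in
/-- set of block boundaries at which `π` has a descent. -/
noncomputable def breakSet : Finset ℕ :=
  (Finset.range (d - 1)).filter (fun s =>
    ∀ (h1 : v * (s + 1) < v * d) (h2 : v * (s + 1) - 1 < v * d),
      π ⟨v * (s + 1), h1⟩ < π ⟨v * (s + 1) - 1, h2⟩)

lemma breakSet_subset : breakSet v d π ⊆ Finset.range (d - 1) :=
  Finset.filter_subset _ _

variable (hv : 0 < v) (hd : 1 ≤ d)
variable (hdia : IsDiamond v d π) (h132 : Avoids132 π) (h213 : Avoids213 π)

include hv in
lemma mem_breakSet {s : ℕ} (hs : s ∈ breakSet v d π) :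
    s < d - 1 ∧ ∃ (h1 : v * (s + 1) < v * d) (h2 : v * (s + 1) - 1 < v * d),
      π ⟨v * (s + 1), h1⟩ < π ⟨v * (s + 1) - 1, h2⟩ := by
  classical
  rw [breakSet, Finset.mem_filter, Finset.mem_range] at hs
  obtain ⟨hsd, hdes⟩ := hs
  have hmul : v * (d - 1) + v = v * d := by rw [← Nat.mul_succ]; congr 1; omega
  have h1 : v * (s + 1) < v * d := by
    have : v * (s + 1) ≤ v * (d - 1) := Nat.mul_le_mul_left v (by omega)
    omega
  exact ⟨hsd, h1, by omega, hdes h1 (by omega)⟩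

include hdia hv hd in
lemma blockAffine (hch : Ch π) (p : Fin (v * d)) (h : v * (p.1 / v) < v * d) :
    (π p).1 = (π ⟨v * (p.1 / v), h⟩).1 + (p.1 - v * (p.1 / v)) := by
  obtain ⟨hb, hl, hr⟩ := block_facts v d hv p.2
  have hvv : p.1 / v * v = v * (p.1 / v) := Nat.mul_comm _ _
  have hk1 : v * (p.1 / v + 1) ≤ v * d := Nat.mul_le_mul_left v (by omega)
  have hk2 : v * (p.1 / v + 1) = v * (p.1 / v) + v := by ring
  have hjv : p.1 - v * (p.1 / v) < v := by omega
  have h0' : p.1 / v * v < v * d := by omega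
  have hj' : p.1 / v * v + (p.1 - v * (p.1 / v)) < v * d := by omega
  have hl' : p.1 / v * v + (v - 1) < v * d := by omega
  obtain ⟨hle, -⟩ := hdia (p.1 / v) hb (p.1 - v * (p.1 / v)) hjv h0' hj' hl'
  have hpe : (⟨p.1 / v * v + (p.1 - v * (p.1 / v)), hj'⟩ :
      Fin (v * d)) = p := Fin.ext (by simp only []; omega)
  have hx : (⟨p.1 / v * v, h0'⟩ : Fin (v * d)) =
      (⟨v * (p.1 / v), h⟩ : Fin (v * d)) := Fin.ext (by simp only []; omega)
  rw [hpe, hx] at hle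
  rcases eq_or_lt_of_le hle with heq | hlt
  · have := congrArg Fin.val (π.injective heq)
    simp only at this
    omega
  · have hvlt : ((⟨v * (p.1 / v), h⟩ : Fin (v * d)) : ℕ) < p.1 := by
      simp only
      rcases Nat.lt_or_ge (v * (p.1 / v)) p.1 with hc | hc
      · exact hc
      · exfalso
        have : p = (⟨v * (p.1 / v), h⟩ : Fin (v * d)) := Fin.ext (by simp only []; omega)
        rw [← this] at hlt
        exact lt_irrefl _ hlt
    have := hch _ _ hvlt hlt
    simp only at this
    omega

include h132 h213 hv in
lemma sep_of_break (hch : Ch π) {s : ℕ} (hs : s ∈ breakSet v d π) (p q : Fin (v * d))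
    (hp : p.1 < v * (s + 1)) (hq : v * (s + 1) ≤ q.1) : π q < π p := by
  obtain ⟨hsd, h1, h2, hdes⟩ := mem_breakSet v d π hv hs
  set x : Fin (v * d) := ⟨v * (s + 1) - 1, h2⟩ with hxdef
  set y : Fin (v * d) := ⟨v * (s + 1), h1⟩ with hydef
  by_contra hc
  push_neg at hc
  rcases eq_or_lt_of_le hc with heq | hlt
  · have := π.injective heq
    subst this
    omega
  · -- π p < π q with p < q
    have hxv : (x : ℕ) = v * (s + 1) - 1 := rfl
    have hyv : (y : ℕ) = v * (s + 1) := rfl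
    have hvpos : 1 ≤ v * (s + 1) := Nat.one_le_iff_ne_zero.mpr (by positivity)
    have hpq : (p : ℕ) < q := by omega
    have hx1 : (π x).1 = (π p).1 + ((x : ℕ) - p) := by
      rcases eq_or_lt_of_le (show (p : ℕ) ≤ x by omega) with heq | hltx
      · rw [show p = x from Fin.ext heq]
        omega
      · have hxq : (x : ℕ) < q := by omega
        have hbet := (between π h132 h213 (show p < x from hltx) (show x < q from hxq) hlt).1
        exact hch p x hltx hbet
    have hy1 : (π y).1 = (π p).1 + ((y : ℕ) - p) := by
      rcases eq_or_lt_of_le (show (y : ℕ) ≤ q by omega) with heq | hlty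
      · rw [show q = y from Fin.ext heq.symm]  at hlt
        exact hch p y (by omega) hlt
      · have hbet := (between π h132 h213 (show p < y by exact (by omega : (p:ℕ) < y)) (show y < q from hlty) hlt).2
        have hbet' := (between π h132 h213 (show p < y by exact (by omega : (p:ℕ) < y)) (show y < q from hlty) hlt).1
        exact hch p y (by omega) hbet'
    have hdes' : (π y).1 < (π x).1 := hdes
    omega

omit hv in
lemma pival (a b : ℕ) (ha : a < v * d) (hb : b < v * d) (hab : a = b) :
    (π ⟨a, ha⟩).1 = (π ⟨b, hb⟩).1 := by subst hab; rfl

include hdia h132 h213 hv hd in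
lemma runAffine (hch : Ch π) :
    ∀ (m : ℕ) (hm : m < v * d) (h : v * sr (breakSet v d π) (m / v) < v * d),
      (π ⟨m, hm⟩).1 = (π ⟨v * sr (breakSet v d π) (m / v), h⟩).1
        + (m - v * sr (breakSet v d π) (m / v)) := by
  classical
  set B := breakSet v d π with hB
  suffices H : ∀ N m (hm : m < v * d) (h : v * sr B (m / v) < v * d), m < N →
      (π ⟨m, hm⟩).1 = (π ⟨v * sr B (m / v), h⟩).1 + (m - v * sr B (m / v)) from
    fun m hm h => H (m + 1) m hm h (Nat.lt_succ_self _)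
  intro N
  induction N with
  | zero => intro m hm h hN; omega
  | succ N ih =>
    intro m hm h hN
    obtain ⟨hb, hl, hr⟩ := block_facts v d hv hm
    have hsrle : sr B (m / v) ≤ m / v := sr_le B (m / v)
    have hva : v * sr B (m / v) ≤ v * (m / v) := Nat.mul_le_mul_left v hsrle
    rcases Nat.lt_or_ge (v * (m / v)) m with hstart | hstart
    · -- not a block start
      have hBA := blockAffine v d π hv hd hdia hch ⟨m, hm⟩ (by simp only []; omega)
      have hdivq : (v * (m / v)) / v = m / v := Nat.mul_div_cancel_left _ hv
      have hih := ih (v * (m / v)) (by omega)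
        (by rw [hdivq]; exact h) (by omega)
      have e1 : (π ⟨v * sr B ((v * (m / v)) / v), by rw [hdivq]; exact h⟩).1 =
          (π ⟨v * sr B (m / v), h⟩).1 := pival v d π _ _ _ _ (by rw [hdivq])
      rw [e1] at hih
      simp only at hBA
      rw [hdivq] at hih
      omega
    · -- block start : m = v * (m / v)
      have hmeq : m = v * (m / v) := by omega
      rcases Nat.eq_or_lt_of_le hsrle with hsr | hsr
      · -- start of run
        have : v * sr B (m / v) = m := by rw [hsr]; omega
        rw [pival v d π m _ hm h this.symm]
        omega
      · -- interior block start of a run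
        have hb1 : 1 ≤ m / v := by omega
        have hmem : m / v - 1 ∉ B := by
          intro hmem
          have : sr B (m / v) = m / v := by
            rw [show m / v = (m / v - 1) + 1 by omega]
            simp [sr, hmem]
          omega
        have hm1 : 1 ≤ m := by
          have := Nat.mul_pos hv (show 0 < m / v by omega)
          omega
        have hexp : v * (m / v - 1) + v = v * (m / v) := by
          rw [← Nat.mul_succ]; congr 1; omega
        have hsplit : m - 1 = v * (m / v - 1) + (v - 1) := by omega
        have hyeq : v * ((m / v - 1) + 1) = m := by
          rw [show (m / v - 1) + 1 = m / v by omega]; omega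
        have hxval : v * ((m / v - 1) + 1) - 1 = m - 1 := by omega
        have hdivx : (m - 1) / v = m / v - 1 := by
          rw [hsplit, Nat.mul_add_div hv, Nat.div_eq_of_lt (show v - 1 < v by omega)]
          omega
        have hsrx : sr B (m / v) = sr B (m / v - 1) := by
          rw [show m / v = (m / v - 1) + 1 by omega]
          simp [sr, hmem]
        have hvb : v * sr B (m / v) ≤ v * (m / v - 1) :=
          Nat.mul_le_mul_left v (by rw [hsrx]; exact (sr_le B _))
        have hnot : ¬ ∀ (h1 : v * ((m / v - 1) + 1) < v * d)
            (h2 : v * ((m / v - 1) + 1) - 1 < v * d),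
            π ⟨v * ((m / v - 1) + 1), h1⟩ < π ⟨v * ((m / v - 1) + 1) - 1, h2⟩ := by
          intro hcon
          apply hmem
          rw [hB, breakSet, Finset.mem_filter, Finset.mem_range]
          exact ⟨by omega, hcon⟩
        push_neg at hnot
        obtain ⟨h1, h2, hge⟩ := hnot
        have pifin : ∀ (a b : ℕ) (ha : a < v * d) (hb : b < v * d), a = b →
            π ⟨a, ha⟩ = π ⟨b, hb⟩ := by
          intro a b ha hb hab; subst hab; rfl
        rw [pifin _ m _ hm hyeq, pifin _ (m - 1) _ (by omega) hxval] at hge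
        have hne : π ⟨m - 1, by omega⟩ ≠ π ⟨m, hm⟩ := by
          intro hcon
          have := congrArg Fin.val (π.injective hcon)
          simp only at this
          omega
        have hlt : π ⟨m - 1, by omega⟩ < π ⟨m, hm⟩ := lt_of_le_of_ne hge hne
        have hchres := hch ⟨m - 1, by omega⟩ ⟨m, hm⟩ (by simp only []; omega) hlt
        simp only at hchres
        have hsx : sr B ((m - 1) / v) = sr B (m / v) := by rw [hdivx, ← hsrx]
        have h' : v * sr B ((m - 1) / v) < v * d := by rw [hsx]; exact h
        have hih := ih (m - 1) (by omega) h' (by omega)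
        have e1 : (π ⟨v * sr B ((m - 1) / v), h'⟩).1 = (π ⟨v * sr B (m / v), h⟩).1 :=
          pival v d π _ _ h' h (by rw [hsx])
        rw [e1, hsx] at hih
        omega

include hdia h132 h213 hv hd in
lemma topValue (hch : Ch π) (b : ℕ) (hb : b < d)
    (h : v * sr (breakSet v d π) b < v * d) :
    (π ⟨v * sr (breakSet v d π) b, h⟩).1
      = v * (d - 1 - er (breakSet v d π) d b) := by
  classical
  have hsa : sr (breakSet v d π) b ≤ b := sr_le _ b
  have hbe : b ≤ er (breakSet v d π) d b := er_ge _ d b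
  have hed : er (breakSet v d π) d b ≤ d - 1 := er_le _ d b (by omega)
  have hEd : v * (d - 1 - er (breakSet v d π) d b) + v * (er (breakSet v d π) d b + 1) = v * d :=
    mul_sub_fact v d hed hd
  have hmain : ∀ q : Fin (v * d),
      π q < π ⟨v * sr (breakSet v d π) b, h⟩ ↔ v * (er (breakSet v d π) d b + 1) ≤ q.1 := by
    intro q
    constructor
    · intro hq
      by_contra hc
      push_neg at hc
      rcases Nat.lt_or_ge q.1 (v * sr (breakSet v d π) b) with hql | hqg
      · -- q before the run
        have ha1 : sr (breakSet v d π) b ≠ 0 := by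
          intro h0; rw [h0] at hql; omega
        have hmemB : sr (breakSet v d π) b - 1 ∈ breakSet v d π := sr_start _ b ha1
        have hae : sr (breakSet v d π) b - 1 + 1 = sr (breakSet v d π) b := by omega
        have := sep_of_break v d π hv h132 h213 hch hmemB q ⟨v * sr (breakSet v d π) b, h⟩
          (by show _ < v * (sr (breakSet v d π) b - 1 + 1); rw [hae]; exact hql)
          (by show v * (sr (breakSet v d π) b - 1 + 1) ≤ _; rw [hae])
        exact absurd hq (lt_asymm this)
      · -- q inside the run
        obtain ⟨hqb, hql2, hqr2⟩ := block_facts v d hv q.2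
        have hc1 : sr (breakSet v d π) b ≤ q.1 / v := by
          rw [Nat.le_div_iff_mul_le hv, Nat.mul_comm]; exact hqg
        have hc2 : q.1 / v ≤ er (breakSet v d π) d b := by
          have : q.1 / v < er (breakSet v d π) d b + 1 := by
            rw [Nat.div_lt_iff_lt_mul hv]
            have hcc := Nat.mul_comm (er (breakSet v d π) d b + 1) v
            omega
          omega
        have hclaim : sr (breakSet v d π) (q.1 / v) = sr (breakSet v d π) b := by
          refine sr_eq _ _ _ hc1 (fun mm hm1 hm2 => ?_) ?_
          · rcases Nat.lt_or_ge mm b with hmb | hmb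
            · exact sr_break _ b mm hm1 hmb
            · exact er_break _ d b mm hmb (by omega)
          · rcases Nat.eq_zero_or_pos (sr (breakSet v d π) b) with h0 | h0
            · exact Or.inl h0
            · exact Or.inr ⟨by omega, sr_start _ b (by omega)⟩
        have h' : v * sr (breakSet v d π) (q.1 / v) < v * d := by rw [hclaim]; exact h
        have hra := runAffine v d π hv hd hdia h132 h213 hch q.1 q.2 h'
        have e1 : (π ⟨v * sr (breakSet v d π) (q.1 / v), h'⟩).1
            = (π ⟨v * sr (breakSet v d π) b, h⟩).1 := pival v d π _ _ h' h (by rw [hclaim])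
        rw [e1, hclaim] at hra
        have hfin : (π ⟨q.1, q.2⟩).1 < (π ⟨v * sr (breakSet v d π) b, h⟩).1 := by
          have : π ⟨q.1, q.2⟩ = π q := by congr
          rw [this]; exact hq
        omega
    · intro hq
      have he : er (breakSet v d π) d b < d - 1 ∨ er (breakSet v d π) d b = d - 1 := by omega
      have hmemB : er (breakSet v d π) d b ∈ breakSet v d π := by
        rcases er_end _ d b (by omega : b ≤ d - 1) with h' | h'
        · exact h'
        · exfalso
          have : v * (er (breakSet v d π) d b + 1) = v * d := by
            rw [h', show d - 1 + 1 = d by omega]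
          have := q.2
          omega
      refine sep_of_break v d π hv h132 h213 hch hmemB ⟨v * sr (breakSet v d π) b, h⟩ q ?_ hq
      simp only []
      have h1 : v * (sr (breakSet v d π) b + 1) ≤ v * (er (breakSet v d π) d b + 1) :=
        Nat.mul_le_mul_left v (by omega)
      have h2 : v * (sr (breakSet v d π) b + 1) = v * sr (breakSet v d π) b + v := by ring
      omega
  have hcount := card_filter_lt_perm π ⟨v * sr (breakSet v d π) b, h⟩
  have hfe : (Finset.univ.filter fun q => π q < π ⟨v * sr (breakSet v d π) b, h⟩)
      = (Finset.univ.filter fun q : Fin (v * d) =>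
          v * (er (breakSet v d π) d b + 1) ≤ q.1) := by
    ext q
    simp only [Finset.mem_filter, Finset.mem_univ, true_and]
    exact hmain q
  rw [hfe, card_filter_le_val] at hcount
  omega

include hdia h132 h213 hv hd in
lemma eq_Fperm (hch : Ch π) : π = Fperm v d (breakSet v d π) hv hd := by
  apply Equiv.ext
  intro p
  apply Fin.ext
  obtain ⟨hb, hl, hr⟩ := block_facts v d hv p.2
  have hsrle : sr (breakSet v d π) (p.1 / v) ≤ p.1 / v := sr_le _ _
  have hva : v * sr (breakSet v d π) (p.1 / v) ≤ v * (p.1 / v) :=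
    Nat.mul_le_mul_left v hsrle
  have h : v * sr (breakSet v d π) (p.1 / v) < v * d := by omega
  have h1 := runAffine v d π hv hd hdia h132 h213 hch p.1 p.2 h
  have h2 := topValue v d π hv hd hdia h132 h213 hch (p.1 / v) hb h
  have hp : π ⟨p.1, p.2⟩ = π p := by congr
  rw [hp] at h1
  show (π p).1 = F v d (breakSet v d π) p.1
  unfold F
  omega

end Unique

section Final

variable (v d : ℕ) (hv : 0 < v) (hd : 1 ≤ d)

lemma breakSet_Fperm (S : Finset ℕ) (hS : S ⊆ Finset.range (d - 1)) :
    breakSet v d (Fperm v d S hv hd) = S := by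
  classical
  have hmul : v * (d - 1) + v = v * d := by rw [← Nat.mul_succ]; congr 1; omega
  ext s
  rw [breakSet, Finset.mem_filter, Finset.mem_range]
  constructor
  · rintro ⟨hsd, hdes⟩
    have h1 : v * (s + 1) < v * d := by
      have : v * (s + 1) ≤ v * (d - 1) := Nat.mul_le_mul_left v (by omega)
      omega
    have hvpos : 1 ≤ v * (s + 1) := Nat.one_le_iff_ne_zero.mpr (by positivity)
    have h2 : v * (s + 1) - 1 < v * d := by omega
    have hlt := hdes h1 h2
    have hdlt : F v d S (v * (s + 1)) < F v d S (v * (s + 1) - 1) := hlt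
    have hdivx : (v * (s + 1) - 1) / v = s := by
      rw [show v * (s + 1) - 1 = v * s + (v - 1) by
            have : v * (s + 1) = v * s + v := by ring
            omega,
        Nat.mul_add_div hv, Nat.div_eq_of_lt (show v - 1 < v by omega)]
      omega
    have := (descent_Fperm_iff v d S hv hd h2 (by omega)).mp
      (by rw [show v * (s + 1) - 1 + 1 = v * (s + 1) by omega]; exact hdlt)
    rw [hdivx] at this
    exact this.1
  · intro hs
    have hsd : s < d - 1 := Finset.mem_range.mp (hS hs)
    refine ⟨hsd, fun h1 h2 => ?_⟩
    have hvpos : 1 ≤ v * (s + 1) := Nat.one_le_iff_ne_zero.mpr (by positivity)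
    show F v d S (v * (s + 1)) < F v d S (v * (s + 1) - 1)
    have hdivx : (v * (s + 1) - 1) / v = s := by
      rw [show v * (s + 1) - 1 = v * s + (v - 1) by
            have : v * (s + 1) = v * s + v := by ring
            omega,
        Nat.mul_add_div hv, Nat.div_eq_of_lt (show v - 1 < v by omega)]
      omega
    have := (descent_Fperm_iff v d S hv hd (by omega : v * (s + 1) - 1 < v * d) (by omega)).mpr
      (by rw [hdivx]; exact ⟨hs, by omega⟩)
    rw [show v * (s + 1) - 1 + 1 = v * (s + 1) by omega] at this
    exact this

end Final

end DP

theorem avoids132_213_descents (v d : ℕ) (hv : 4 ≤ v) (hd : 1 ≤ d) :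
    ∀ k : ℕ,
      Nat.card {π : Equiv.Perm (Fin (v * d)) //
          IsDiamond v d π ∧ Avoids132 π ∧ Avoids213 π ∧ desNum π = k} =
        (d - 1).choose k := by
  intro k
  have hv0 : 0 < v := by omega
  classical
  have e : {π : Equiv.Perm (Fin (v * d)) //
        IsDiamond v d π ∧ Avoids132 π ∧ Avoids213 π ∧ desNum π = k} ≃
      {S : Finset ℕ // S ∈ Finset.powersetCard k (Finset.range (d - 1))} :=
    { toFun := fun x => ⟨DP.breakSet v d x.1, by
        obtain ⟨π, hD, h1, h2, hk⟩ := x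
        rw [Finset.mem_powersetCard]
        refine ⟨DP.breakSet_subset v d π, ?_⟩
        have hch := DP.ch_of_avoids π h1 h2
        have heq := DP.eq_Fperm v d π hv0 hd hD h1 h2 hch
        rw [heq, DP.desNum_Fperm v d _ hv0 hd (DP.breakSet_subset v d π)] at hk
        exact hk⟩
      invFun := fun x => ⟨DP.Fperm v d x.1 hv0 hd, by
        obtain ⟨S, hS⟩ := x
        rw [Finset.mem_powersetCard] at hS
        refine ⟨DP.diamond_Fperm v d S hv0 hd,
          (DP.avoids_of_ch _ (DP.ch_Fperm v d S hv0 hd)).1,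
          (DP.avoids_of_ch _ (DP.ch_Fperm v d S hv0 hd)).2, ?_⟩
        rw [DP.desNum_Fperm v d S hv0 hd hS.1]
        exact hS.2⟩
      left_inv := fun x => by
        obtain ⟨π, hD, h1, h2, hk⟩ := x
        apply Subtype.ext
        exact (DP.eq_Fperm v d π hv0 hd hD h1 h2 (DP.ch_of_avoids π h1 h2)).symm
      right_inv := fun x => by
        obtain ⟨S, hS⟩ := x
        apply Subtype.ext
        rw [Finset.mem_powersetCard] at hS
        exact DP.breakSet_Fperm v d hv0 hd S hS.1 }
  rw [Nat.card_congr e, Nat.card_eq_fintype_card, Fintype.card_coe,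
    Finset.card_powersetCard, Finset.card_range]
end

section
/- Let π be a diamond permutation of type (v,d), with d ≥ 2 and v ≥ 4, avoiding both 132 and 312. Then the last block of v entries of π is either (v(d-1)+1, v(d-1)+2, ..., vd) or (1, v(d-1)+2, v(d-1)+3, ..., vd). -/
theorem avoids132_312_last_block (v d : ℕ) (hv : 4 ≤ v) (hd : 2 ≤ d)
    (π : Equiv.Perm (Fin (v * d))) (hD : IsDiamond v d π)
    (hA : Avoids132 π) (hB : Avoids312 π) :
    (∀ j, j < v → ∀ (h : (d - 1) * v + j < v * d),
        (π ⟨(d - 1) * v + j, h⟩).1 = (d - 1) * v + j) ∨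
      ((∀ (h : (d - 1) * v < v * d), (π ⟨(d - 1) * v, h⟩).1 = 0) ∧
        ∀ j, 1 ≤ j → j < v → ∀ (h : (d - 1) * v + j < v * d),
          (π ⟨(d - 1) * v + j, h⟩).1 = (d - 1) * v + j) := by
  have hn8 : 8 ≤ v * d := by
    calc (8:ℕ) = 4 * 2 := rfl
    _ ≤ v * d := Nat.mul_le_mul hv hd
  have hL : (d - 1) * v + v = v * d := by
    have h1 : (d - 1) + 1 = d := by omega
    calc (d - 1) * v + v = ((d - 1) + 1) * v := (Nat.succ_mul _ _).symm
    _ = d * v := by rw [h1]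
    _ = v * d := Nat.mul_comm _ _
  -- dichotomy: every entry is a new min or a new max of its prefix
  have dich : ∀ k : Fin (v * d), (∀ i, i < k → π i < π k) ∨ (∀ i, i < k → π k < π i) := by
    intro k
    by_contra hc
    push_neg at hc
    obtain ⟨⟨a, hak, ha⟩, b, hbk, hb⟩ := hc
    have ha' : π k < π a := lt_of_le_of_ne ha (fun h => ne_of_lt hak (π.injective h).symm)
    have hb' : π b < π k := lt_of_le_of_ne hb (fun h => (ne_of_lt hbk) (π.injective h))
    rcases lt_trichotomy a b with h | h | h
    · exact hB ⟨a, b, k, h, hbk, hb', ha'⟩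
    · exact absurd (h ▸ hb') (asymm ha')
    · exact hA ⟨b, a, k, h, hak, hb', ha'⟩
  have hz : (0 : ℕ) < v * d := by omega
  set z : Fin (v * d) := ⟨0, hz⟩ with hzdef
  set pz : Fin (v * d) := π.symm z with hpzdef
  have hπpz : π pz = z := π.apply_symm_apply z
  -- everything after pz is a new max
  have stepA : ∀ j : Fin (v * d), pz < j → ∀ i, i < j → π i < π j := by
    intro j hpj i hij
    rcases dich j with h | h
    · exact h i hij
    · have := h pz hpj
      rw [hπpz] at this
      exact absurd this (by simp [Fin.lt_def, hzdef])
  -- downward induction step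
  have step : ∀ j : Fin (v * d), pz < j → (∀ k : Fin (v * d), j < k → π k = k) → π j = j := by
    intro j hpj hIH
    have hπm : π (π.symm j) = j := π.apply_symm_apply j
    rcases lt_trichotomy (π.symm j) j with h | h | h
    · exfalso
      have h1 : π (π.symm j) < π j := stepA j hpj _ h
      rw [hπm] at h1
      have h2 : (π j).1 ≤ j.1 := by
        by_contra hlt
        push_neg at hlt
        have hk : j < (⟨(π j).1, (π j).2⟩ : Fin (v * d)) := hlt
        have h3 := hIH _ hk
        have h4 : π j = π ⟨(π j).1, (π j).2⟩ := by
          rw [h3]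
        have h5 := π.injective h4
        have : j.1 = (π j).1 := congrArg Fin.val h5
        omega
      exact absurd (Fin.lt_def.mp h1) (by omega)
    · rw [h] at hπm; exact hπm
    · exact absurd (hπm.symm.trans (hIH _ h)) (ne_of_lt h)
  -- all positions after pz are fixed
  have hfix : ∀ j : Fin (v * d), pz < j → π j = j := by
    suffices h : ∀ t, ∀ j : Fin (v * d), v * d - 1 - j.1 ≤ t → pz < j → π j = j by
      intro j hj; exact h (v * d) j (by omega) hj
    intro t
    induction t with
    | zero =>
      intro j hj hpj
      refine step j hpj (fun k hk => absurd hk ?_)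
      have := k.2
      simp only [Fin.lt_def]
      omega
    | succ t ih =>
      intro j hj hpj
      refine step j hpj (fun k hk => ih k ?_ (lt_trans hpj hk))
      have := k.2
      have hk' : j.1 < k.1 := hk
      omega
  by_cases hcase : pz.1 < (d - 1) * v
  · left
    intro j hjv h
    have hlt : pz < (⟨(d - 1) * v + j, h⟩ : Fin (v * d)) := by
      simp only [Fin.lt_def]; omega
    have := hfix _ hlt
    exact congrArg Fin.val this
  · right
    push_neg at hcase
    have hj0 : pz.1 - (d - 1) * v < v := by have := pz.2; omega
    have h0 : (d - 1) * v < v * d := by omega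
    have hjq : (d - 1) * v + (pz.1 - (d - 1) * v) < v * d := by have := pz.2; omega
    have hl : (d - 1) * v + (v - 1) < v * d := by omega
    have hdia := (hD (d - 1) (by omega) _ hj0 h0 hjq hl).1
    have hpz' : (⟨(d - 1) * v + (pz.1 - (d - 1) * v), hjq⟩ : Fin (v * d)) = pz := by
      apply Fin.ext
      show (d - 1) * v + (pz.1 - (d - 1) * v) = pz.1
      exact Nat.add_sub_cancel' hcase
    rw [hpz', hπpz] at hdia
    have hdia0 : (π ⟨(d - 1) * v, h0⟩).1 = 0 := by
      have := (Fin.le_def.mp hdia)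
      simpa [hzdef] using this
    have hpzL : pz.1 = (d - 1) * v := by
      have : π ⟨(d - 1) * v, h0⟩ = π pz := by
        apply Fin.ext
        rw [hdia0, hπpz]
      exact (congrArg Fin.val (π.injective this)).symm
    constructor
    · intro h
      have : (⟨(d - 1) * v, h⟩ : Fin (v * d)) = pz := Fin.ext (by simp [hpzL])
      rw [this, hπpz]
    · intro j hj1 hjv h
      have hlt : pz < (⟨(d - 1) * v + j, h⟩ : Fin (v * d)) := by
        simp only [Fin.lt_def]; omega
      exact congrArg Fin.val (hfix _ hlt)
end

section
/- For v ≥ 4 and d ≥ 1, the number of diamond permutations of type (v,d) avoiding both 132 and 312 equals 2^{d-1}. -/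
/-!
A permutation avoids 132 and 312 exactly when each entry is a left-to-right minimum or a
left-to-right maximum, and such a permutation is determined by the positions of its minima: the
entry at `p` exceeds exactly the later minima, and also all earlier entries when `p` is a maximum.
In a diamond permutation an entry that is not at a block start lies above the block start before
it, so it cannot be a minimum; conversely, if every such entry is a maximum the permutation is
diamond. The permutations counted thus correspond to the subsets of the `d - 1` block starts after
the first one.
-/

theorem Equiv.Perm.eq_of_lt_iff_lt_s11 {α : Type*} [LinearOrder α] [Finite α] {σ τ : Equiv.Perm α}
    (h : ∀ a b, a < b → (σ a < σ b ↔ τ a < τ b)) : σ = τ := by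
  have hmono : StrictMono (σ ∘ τ.symm) := by
    intro x y hxy
    have hne : τ.symm x ≠ τ.symm y := τ.symm.injective.ne hxy.ne
    rcases hne.lt_or_gt with hlt | hgt
    · simpa using (h _ _ hlt).2 (by simpa using hxy)
    · have hnot : ¬ σ (τ.symm y) < σ (τ.symm x) := fun hσ =>
        hxy.not_gt (by simpa using (h _ _ hgt).1 hσ)
      exact (not_lt.1 hnot).lt_of_ne (σ.injective.ne hne)
  ext a
  simpa using congrFun hmono.eq_id (τ a)

open Finset

section LeftToRight

variable {n : ℕ}

def IsLRMin (π : Equiv.Perm (Fin n)) (p : Fin n) : Prop := ∀ q < p, π p < π q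

def IsLRMax (π : Equiv.Perm (Fin n)) (p : Fin n) : Prop := ∀ q < p, π q < π p

theorem avoids132_and_avoids312_iff (π : Equiv.Perm (Fin n)) :
    Avoids132 π ∧ Avoids312 π ↔ ∀ p, IsLRMin π p ∨ IsLRMax π p := by
  constructor
  · rintro ⟨h132, h312⟩ p
    by_contra! ⟨hmin, hmax⟩
    simp only [IsLRMin, IsLRMax, not_forall, not_lt] at hmin hmax
    obtain ⟨a, hap, ha⟩ := hmin
    obtain ⟨b, hbp, hb⟩ := hmax
    have ha' : π a < π p := ha.lt_of_ne (π.injective.ne hap.ne)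
    have hb' : π p < π b := hb.lt_of_ne (π.injective.ne hbp.ne')
    rcases lt_trichotomy a b with hab | rfl | hba
    · exact h132 ⟨a, b, p, hab, hbp, ha', hb'⟩
    · exact lt_asymm ha' hb'
    · exact h312 ⟨b, a, p, hba, hap, ha', hb'⟩
  · intro h
    constructor
    · rintro ⟨i, j, k, hij, hjk, hik, hkj⟩
      rcases h k with hk | hk
      · exact lt_asymm hik (hk i (hij.trans hjk))
      · exact lt_asymm hkj (hk j hjk)
    · rintro ⟨i, j, k, hij, hjk, hjk', hki⟩
      rcases h k with hk | hk
      · exact lt_asymm hjk' (hk j hjk)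
      · exact lt_asymm hki (hk i (hij.trans hjk))

theorem not_isLRMin_of_isLRMax {π : Equiv.Perm (Fin n)} {p : Fin n} (hp : p.val ≠ 0)
    (hmax : IsLRMax π p) : ¬ IsLRMin π p := fun hmin =>
  have h0 : (⟨0, p.pos⟩ : Fin n) < p := Fin.mk_lt_mk.2 (Nat.pos_of_ne_zero hp)
  lt_asymm (hmin _ h0) (hmax _ h0)

theorem lt_iff_notMem_of_isLR {π : Equiv.Perm (Fin n)} {M : Finset (Fin n)}
    (hmin : ∀ p ∈ M, IsLRMin π p) (hmax : ∀ p ∉ M, IsLRMax π p) {p q : Fin n} (hqp : q < p) :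
    π q < π p ↔ p ∉ M :=
  ⟨fun hlt hp => lt_asymm hlt (hmin p hp q hqp), fun hp => hmax p hp q hqp⟩

def lrRank (M : Finset (Fin n)) (p : Fin n) : ℕ :=
  (if p ∈ M then 0 else p.val) + #{q ∈ M | p < q}

theorem lrRank_lt (M : Finset (Fin n)) (p : Fin n) : lrRank M p < n := by
  have hcard : #{q ∈ M | p < q} ≤ n - 1 - p.val := by
    rw [← Fin.card_Ioi]
    exact card_le_card fun q hq => by simpa using (mem_filter.1 hq).2
  have := p.isLt
  unfold lrRank
  split_ifs <;> omega

theorem lrRank_lt_lrRank_of_mem {M : Finset (Fin n)} {p q : Fin n} (hqp : q < p) (hp : p ∈ M) :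
    lrRank M p < lrRank M q := by
  have hssub : {r ∈ M | p < r} ⊂ {r ∈ M | q < r} :=
    (ssubset_iff_of_subset fun r hr => by
      simp only [mem_filter] at hr ⊢; exact ⟨hr.1, hqp.trans hr.2⟩).2
      ⟨p, by simpa using ⟨hp, hqp⟩, by simp⟩
  have := card_lt_card hssub
  unfold lrRank
  split_ifs <;> omega

theorem lrRank_lt_lrRank_of_notMem {M : Finset (Fin n)} {p q : Fin n} (hqp : q < p)
    (hp : p ∉ M) : lrRank M q < lrRank M p := by
  have hsub : {r ∈ M | q < r} ⊆ {r ∈ M | p < r} ∪ Ioo q p := by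
    intro r hr
    simp only [mem_filter, mem_union, mem_Ioo] at hr ⊢
    rcases lt_trichotomy r p with hrp | rfl | hpr
    · exact .inr ⟨hr.2, hrp⟩
    · exact absurd hr.1 hp
    · exact .inl ⟨hr.1, hpr⟩
  have hcard := (card_le_card hsub).trans (card_union_le _ _)
  rw [Fin.card_Ioo] at hcard
  have : q.val < p.val := hqp
  unfold lrRank
  split_ifs <;> omega

theorem lrRank_injective (M : Finset (Fin n)) : Function.Injective (lrRank M) := by
  intro p q hpq
  by_contra hne
  wlog hqp : q < p generalizing p q
  · exact this hpq.symm (Ne.symm hne) ((lt_or_gt_of_ne hne).resolve_right hqp)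
  by_cases hp : p ∈ M
  · exact (lrRank_lt_lrRank_of_mem hqp hp).ne hpq
  · exact (lrRank_lt_lrRank_of_notMem hqp hp).ne' hpq

noncomputable def lrPerm (M : Finset (Fin n)) : Equiv.Perm (Fin n) :=
  Equiv.ofBijective (fun p => ⟨lrRank M p, lrRank_lt M p⟩) <|
    Finite.injective_iff_bijective.1 fun _ _ h => lrRank_injective M (congrArg Fin.val h)

theorem isLRMin_lrPerm {M : Finset (Fin n)} {p : Fin n} (hp : p ∈ M) : IsLRMin (lrPerm M) p :=
  fun _ hqp => Fin.mk_lt_mk.2 (lrRank_lt_lrRank_of_mem hqp hp)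

theorem isLRMax_lrPerm {M : Finset (Fin n)} {p : Fin n} (hp : p ∉ M) : IsLRMax (lrPerm M) p :=
  fun _ hqp => Fin.mk_lt_mk.2 (lrRank_lt_lrRank_of_notMem hqp hp)

theorem avoids132_and_avoids312_lrPerm (M : Finset (Fin n)) :
    Avoids132 (lrPerm M) ∧ Avoids312 (lrPerm M) :=
  (avoids132_and_avoids312_iff _).2 fun p =>
    if hp : p ∈ M then .inl (isLRMin_lrPerm hp) else .inr (isLRMax_lrPerm hp)

theorem eq_lrPerm {π : Equiv.Perm (Fin n)} {M : Finset (Fin n)}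
    (hmin : ∀ p ∈ M, IsLRMin π p) (hmax : ∀ p ∉ M, IsLRMax π p) : π = lrPerm M :=
  Equiv.Perm.eq_of_lt_iff_lt_s11 fun _ _ hqp =>
    (lt_iff_notMem_of_isLR hmin hmax hqp).trans
      (lt_iff_notMem_of_isLR (fun _ => isLRMin_lrPerm) (fun _ => isLRMax_lrPerm) hqp).symm

open scoped Classical in
/-- The first position is left out: it is a left-to-right minimum and maximum of every
permutation. -/
noncomputable def lrMinSet (π : Equiv.Perm (Fin n)) : Finset (Fin n) :=
  {p | p.val ≠ 0 ∧ IsLRMin π p}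

theorem mem_lrMinSet {π : Equiv.Perm (Fin n)} {p : Fin n} :
    p ∈ lrMinSet π ↔ p.val ≠ 0 ∧ IsLRMin π p := by
  simp [lrMinSet]

theorem isLRMax_of_notMem_lrMinSet {π : Equiv.Perm (Fin n)}
    (h : ∀ p, IsLRMin π p ∨ IsLRMax π p) {p : Fin n} (hp : p ∉ lrMinSet π) : IsLRMax π p := by
  by_cases hp0 : p.val = 0
  · exact fun q hq => absurd (Fin.lt_def.1 hq) (by omega)
  · exact (h p).resolve_left fun hmin => hp (mem_lrMinSet.2 ⟨hp0, hmin⟩)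

theorem lrPerm_lrMinSet {π : Equiv.Perm (Fin n)} (h : ∀ p, IsLRMin π p ∨ IsLRMax π p) :
    lrPerm (lrMinSet π) = π :=
  (eq_lrPerm (fun _ hp => (mem_lrMinSet.1 hp).2) fun _ => isLRMax_of_notMem_lrMinSet h).symm

theorem lrMinSet_lrPerm {M : Finset (Fin n)} (hM : ∀ p ∈ M, p.val ≠ 0) :
    lrMinSet (lrPerm M) = M := by
  ext p
  rw [mem_lrMinSet]
  refine ⟨fun ⟨hp0, hmin⟩ => ?_, fun hp => ⟨hM p hp, isLRMin_lrPerm hp⟩⟩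
  by_contra hp
  exact not_isLRMin_of_isLRMax hp0 (isLRMax_lrPerm hp) hmin

end LeftToRight

theorem not_dvd_mul_add {v i j : ℕ} (hj0 : j ≠ 0) (hjv : j < v) : ¬ v ∣ i * v + j := by
  rw [Nat.dvd_add_right (dvd_mul_left v i)]
  exact Nat.not_dvd_of_pos_of_lt (Nat.pos_of_ne_zero hj0) hjv

section Diamond

variable {v d : ℕ}

theorem dvd_of_isDiamond_of_isLRMin {π : Equiv.Perm (Fin (v * d))} (hπ : IsDiamond v d π)
    {p : Fin (v * d)} (hp : IsLRMin π p) : v ∣ p.val := by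
  have hv : 0 < v := Nat.pos_of_mul_pos_right p.pos
  set i := p.val / v
  set j := p.val % v
  have hp_eq : i * v + j = p.val := by rw [Nat.mul_comm]; exact Nat.div_add_mod _ _
  by_contra hdvd
  have hj0 : j ≠ 0 := fun h => hdvd (Nat.dvd_of_mod_eq_zero h)
  have hjv : j < v := Nat.mod_lt _ hv
  have hid : i < d := Nat.div_lt_of_lt_mul p.isLt
  have hlast : i * v + (v - 1) < v * d := by
    have h := Nat.mul_le_mul_right v (Nat.succ_le_of_lt hid)
    rw [Nat.succ_mul, Nat.mul_comm d] at h
    omega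
  have hle := (hπ i hid j hjv (by omega) (by omega) hlast).1
  have hlt := hp ⟨i * v, by omega⟩ (Fin.mk_lt_mk.2 (by omega))
  simp only [hp_eq] at hle
  exact absurd hle (not_le.2 hlt)

theorem isDiamond_of_isLRMax {π : Equiv.Perm (Fin (v * d))}
    (h : ∀ p : Fin (v * d), ¬ v ∣ p.val → IsLRMax π p) : IsDiamond v d π := by
  intro i _ j hjv h0 hj hl
  constructor
  · rcases Nat.eq_zero_or_pos j with rfl | hj0
    · exact le_of_eq (congrArg π (Fin.ext rfl))
    · exact (h _ (not_dvd_mul_add hj0.ne' hjv) _ (Fin.mk_lt_mk.2 (by omega))).le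
  · rcases (Nat.le_sub_one_of_lt hjv).eq_or_lt with rfl | hjl
    · exact le_rfl
    · exact (h _ (not_dvd_mul_add (by omega) (by omega)) _ (Fin.mk_lt_mk.2 (by omega))).le

open scoped Classical in
def blockStarts (v d : ℕ) : Finset (Fin (v * d)) :=
  {p | p.val ≠ 0 ∧ v ∣ p.val}

theorem mem_blockStarts {p : Fin (v * d)} : p ∈ blockStarts v d ↔ p.val ≠ 0 ∧ v ∣ p.val := by
  simp [blockStarts]

theorem card_blockStarts (hv : 0 < v) : #(blockStarts v d) = d - 1 := by
  have hlt : ∀ i ∈ range (d - 1), (i + 1) * v < v * d := fun i hi => by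
    rw [Nat.mul_comm v]
    exact (Nat.mul_lt_mul_right hv).2 (by have := mem_range.1 hi; omega)
  rw [← card_range (d - 1)]
  refine (card_bij (fun i hi => ⟨(i + 1) * v, hlt i hi⟩) ?_ ?_ ?_).symm
  · exact fun i _ => mem_blockStarts.2 ⟨by positivity, dvd_mul_left v _⟩
  · intro i _ j _ hij
    have := Nat.eq_of_mul_eq_mul_right hv (Fin.mk.inj hij)
    omega
  · intro p hp
    obtain ⟨hp0, k, hk⟩ := mem_blockStarts.1 hp
    have hkd : k < d := Nat.lt_of_mul_lt_mul_left (hk ▸ p.isLt)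
    have hk0 : k ≠ 0 := by rintro rfl; simp_all
    refine ⟨k - 1, mem_range.2 (by omega), Fin.ext ?_⟩
    change (k - 1 + 1) * v = p.val
    rw [Nat.sub_add_cancel (Nat.pos_of_ne_zero hk0), hk, Nat.mul_comm]

theorem lrMinSet_subset_blockStarts {π : Equiv.Perm (Fin (v * d))} (hπ : IsDiamond v d π) :
    lrMinSet π ⊆ blockStarts v d := fun _ hp =>
  mem_blockStarts.2 ⟨(mem_lrMinSet.1 hp).1, dvd_of_isDiamond_of_isLRMin hπ (mem_lrMinSet.1 hp).2⟩

theorem isDiamond_lrPerm {M : Finset (Fin (v * d))} (hM : M ⊆ blockStarts v d) :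
    IsDiamond v d (lrPerm M) :=
  isDiamond_of_isLRMax fun _ hp => isLRMax_lrPerm fun hpM => hp (mem_blockStarts.1 (hM hpM)).2

noncomputable def diamondAvoiderEquivPowerset (v d : ℕ) :
    {π : Equiv.Perm (Fin (v * d)) // IsDiamond v d π ∧ Avoids132 π ∧ Avoids312 π} ≃
      (blockStarts v d).powerset where
  toFun π := ⟨lrMinSet π.1, mem_powerset.2 (lrMinSet_subset_blockStarts π.2.1)⟩
  invFun M :=
    ⟨lrPerm M.1, isDiamond_lrPerm (mem_powerset.1 M.2), avoids132_and_avoids312_lrPerm M.1⟩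
  left_inv π := Subtype.ext (lrPerm_lrMinSet ((avoids132_and_avoids312_iff _).1 π.2.2))
  right_inv M := Subtype.ext <| lrMinSet_lrPerm fun _ hp =>
    (mem_blockStarts.1 (mem_powerset.1 M.2 hp)).1

end Diamond

theorem avoids132_312_count_general (v d : ℕ) (hv : 4 ≤ v) :
    Nat.card {π : Equiv.Perm (Fin (v * d)) // IsDiamond v d π ∧ Avoids132 π ∧ Avoids312 π} =
      2 ^ (d - 1) := by
  rw [Nat.card_congr (diamondAvoiderEquivPowerset v d), Nat.card_eq_finsetCard, card_powerset,
    card_blockStarts (by omega)]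

theorem avoids132_312_count (v d : ℕ) (hv : 4 ≤ v) (hd : 1 ≤ d) :
    Nat.card {π : Equiv.Perm (Fin (v * d)) // IsDiamond v d π ∧ Avoids132 π ∧ Avoids312 π} =
      2 ^ (d - 1) :=
  avoids132_312_count_general v d hv
end

section
/- For v ≥ 4 and d ≥ 1, the number of diamond permutations of type (v,d) avoiding both 132 and 321 equals 1 + v·d(d-1)/2. -/
namespace DPAux

def rf (a b : ℕ) (i : ℕ) : ℕ := if i < b then i + a else if i < a + b then i - b else i

lemma rf_lt {n a b i : ℕ} (h : a + b ≤ n) (hi : i < n) : rf a b i < n := by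
  unfold rf; split_ifs <;> omega

def rotp (n a b : ℕ) (h : a + b ≤ n) : Equiv.Perm (Fin n) where
  toFun i := ⟨rf a b i, rf_lt h i.2⟩
  invFun i := ⟨rf b a i, rf_lt (by omega) i.2⟩
  left_inv i := by ext; simp only [rf]; split_ifs <;> omega
  right_inv i := by ext; simp only [rf]; split_ifs <;> omega

lemma rotp_val {n a b : ℕ} (h : a + b ≤ n) (i : Fin n) :
    ((rotp n a b h) i).1 = rf a b i.1 := rfl

lemma rotp_symm_val {n a b : ℕ} (h : a + b ≤ n) (i : Fin n) :
    ((rotp n a b h).symm i).1 = rf b a i.1 := rfl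

lemma rotp_avoids132 {n a b : ℕ} (h : a + b ≤ n) : Avoids132 (rotp n a b h) := by
  rintro ⟨i, j, k, hij, hjk, h1, h2⟩
  rw [Fin.lt_def] at hij hjk h1 h2
  rw [rotp_val, rotp_val] at h1 h2
  have hkn := k.2
  unfold rf at h1 h2
  split_ifs at h1 h2 <;> omega

lemma rotp_avoids321 {n a b : ℕ} (h : a + b ≤ n) : Avoids321 (rotp n a b h) := by
  rintro ⟨i, j, k, hij, hjk, h1, h2⟩
  rw [Fin.lt_def] at hij hjk h1 h2
  rw [rotp_val, rotp_val] at h1 h2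
  have hkn := k.2
  unfold rf at h1 h2
  split_ifs at h1 h2 <;> omega

lemma rf_mono {a b : ℕ} (x y : ℕ) (hxy : x ≤ y) (hside : y < b ∨ b ≤ x) :
    rf a b x ≤ rf a b y := by
  unfold rf; split_ifs <;> omega

lemma rotp_diamond {v d a b : ℕ} (hv : 1 ≤ v) (hb : v ∣ b) (h : a + b ≤ v * d) :
    IsDiamond v d (rotp (v * d) a b h) := by
  obtain ⟨m, rfl⟩ := hb
  intro i hi j hj h0 hjlt hl
  have hcomm : v * m = m * v := Nat.mul_comm v m
  have hside : ∀ x y : ℕ, i * v ≤ x → y ≤ i * v + (v - 1) → (y < v * m ∨ v * m ≤ x) := by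
    intro x y hx hy
    rcases lt_or_ge i m with hlt | hle
    · left
      have h2 : (i + 1) * v ≤ m * v := Nat.mul_le_mul_right v hlt
      rw [Nat.succ_mul] at h2
      omega
    · right
      have h2 : m * v ≤ i * v := Nat.mul_le_mul_right v hle
      omega
  constructor <;> rw [Fin.le_def, rotp_val, rotp_val]
  · exact rf_mono (i * v) (i * v + j) (by omega) (hside _ _ le_rfl (by omega))
  · exact rf_mono (i * v + j) (i * v + (v - 1)) (by omega) (hside _ _ (by omega) le_rfl)

lemma rotp_not_diamond {v d a b : ℕ} (hv : 1 ≤ v) (ha : 1 ≤ a) (hb1 : 1 ≤ b)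
    (hnd : ¬ v ∣ b) (h : a + b ≤ v * d) :
    ¬ IsDiamond v d (rotp (v * d) a b h) := by
  intro hD
  set q := b / v with hq
  set r := b % v with hr
  have hr0 : 0 < r := by
    rcases Nat.eq_zero_or_pos r with h0 | h0
    · exact absurd (Nat.dvd_of_mod_eq_zero h0) hnd
    · exact h0
  have hrv : r < v := Nat.mod_lt _ (by omega)
  have h6 := Nat.div_add_mod b v
  have hqb : q * v + r = b := by rw [hq, hr, Nat.mul_comm]; omega
  have hcomm : v * d = d * v := Nat.mul_comm v d
  have hqd : q < d := by
    by_contra hcon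
    push_neg at hcon
    have h2 : d * v ≤ q * v := Nat.mul_le_mul_right v hcon
    omega
  have h5 : (q + 1) * v ≤ d * v := Nat.mul_le_mul_right v hqd
  rw [Nat.succ_mul] at h5
  have h0 : q * v < v * d := by omega
  have hjlt : q * v + r < v * d := by omega
  have hl : q * v + (v - 1) < v * d := by omega
  have := (hD q hqd r hrv h0 hjlt hl).1
  rw [Fin.le_def, rotp_val, rotp_val] at this
  simp only [rf] at this
  split_ifs at this <;> omega

lemma avoids132_symm {n : ℕ} {π : Equiv.Perm (Fin n)} (h : Avoids132 π) :
    Avoids132 π.symm := by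
  rintro ⟨i, j, k, hij, hjk, h1, h2⟩
  exact h ⟨π.symm i, π.symm k, π.symm j, h1, h2,
    by simpa using hij, by simpa using hjk⟩

lemma avoids321_symm {n : ℕ} {π : Equiv.Perm (Fin n)} (h : Avoids321 π) :
    Avoids321 π.symm := by
  rintro ⟨i, j, k, hij, hjk, h1, h2⟩
  exact h ⟨π.symm k, π.symm j, π.symm i, h1, h2,
    by simpa using hij, by simpa using hjk⟩

lemma mono_lt {n : ℕ} (hn : 0 < n) (π : Equiv.Perm (Fin n)) (h321 : Avoids321 π)
    {b : ℕ} (hb : (π.symm ⟨0, hn⟩ : Fin n).1 = b) :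
    ∀ i j : Fin n, i < j → (j : ℕ) < b → π i < π j := by
  intro i j hij hjb
  rcases lt_trichotomy (π i) (π j) with h | h | h
  · exact h
  · exact absurd (π.injective h) (Fin.ne_of_lt hij)
  · exfalso
    have hj0 : (⟨0, hn⟩ : Fin n) < π j := by
      rw [Fin.lt_def]
      rcases Nat.eq_zero_or_pos (π j).1 with h0 | h0
      · exfalso
        have : π j = ⟨0, hn⟩ := Fin.ext h0
        have : j = π.symm ⟨0, hn⟩ := by rw [← this, Equiv.symm_apply_apply]
        rw [this] at hjb; omega
      · exact h0
    refine h321 ⟨i, j, π.symm ⟨0, hn⟩, hij, ?_, ?_, h⟩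
    · rw [Fin.lt_def, hb]; exact hjb
    · rwa [Equiv.apply_symm_apply]

lemma mono_ge {n : ℕ} (hn : 0 < n) (π : Equiv.Perm (Fin n)) (h132 : Avoids132 π)
    {b : ℕ} (hb : (π.symm ⟨0, hn⟩ : Fin n).1 = b) :
    ∀ i j : Fin n, b ≤ (i : ℕ) → i < j → π i < π j := by
  intro i j hbi hij
  have hj0 : (⟨0, hn⟩ : Fin n) < π j := by
    rw [Fin.lt_def]
    rcases Nat.eq_zero_or_pos (π j).1 with h0 | h0
    · exfalso
      have he : π j = ⟨0, hn⟩ := Fin.ext h0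
      have he2 : j = π.symm ⟨0, hn⟩ := by rw [← he, Equiv.symm_apply_apply]
      have : (j : ℕ) = b := by rw [he2, hb]
      have := Fin.lt_def.1 hij
      omega
    · exact h0
  rcases eq_or_lt_of_le hbi with he | hlt
  · have : i = π.symm ⟨0, hn⟩ := Fin.ext (by rw [hb, ← he])
    rw [this, Equiv.apply_symm_apply]
    exact hj0
  · rcases lt_trichotomy (π i) (π j) with h | h | h
    · exact h
    · exact absurd (π.injective h) (Fin.ne_of_lt hij)
    · exfalso
      refine h132 ⟨π.symm ⟨0, hn⟩, i, j, ?_, hij, ?_, h⟩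
      · rw [Fin.lt_def, hb]; exact hlt
      · rw [Equiv.apply_symm_apply]; exact hj0

lemma init_vals {n : ℕ} (hn : 0 < n) (π : Equiv.Perm (Fin n))
    (h132 : Avoids132 π) (h321 : Avoids321 π)
    {a b : ℕ} (ha : (π ⟨0, hn⟩ : Fin n).1 = a) (hb : (π.symm ⟨0, hn⟩ : Fin n).1 = b) :
    ∀ i : ℕ, ∀ hi : i < b,
      (π ⟨i, lt_of_lt_of_le hi (le_of_lt ((hb ▸ (π.symm ⟨0, hn⟩).2)))⟩ : Fin n).1 = a + i := by
  have hbn : b < n := hb ▸ (π.symm ⟨0, hn⟩).2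
  intro i
  induction i with
  | zero =>
    intro hi
    simpa using ha
  | succ i ih =>
    intro hi
    have hib : i < b := by omega
    have h1 := ih hib
    have hin : i < n := by omega
    have hin1 : i + 1 < n := by omega
    have hmono := mono_lt hn π h321 hb ⟨i, hin⟩ ⟨i + 1, hin1⟩ (by simp [Fin.lt_def]) hi
    rw [Fin.lt_def] at hmono
    have hlow : a + i < (π ⟨i + 1, hin1⟩).1 := by
      rw [← h1]; convert hmono using 3
    by_contra hne
    have hgt : a + i + 1 < (π ⟨i + 1, hin1⟩ : Fin n).1 := by
      rcases Nat.lt_or_ge (a + i + 1) (π ⟨i + 1, hin1⟩ : Fin n).1 with h | h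
      · exact h
      · exact absurd (by omega : ((π ⟨i + 1, hin1⟩ : Fin n)).1 = a + (i + 1)) hne
    have hmn : a + i + 1 < n := lt_trans hgt (Fin.is_lt _)
    set m : Fin n := ⟨a + i + 1, hmn⟩ with hm
    set k := π.symm m with hk
    have hπk : π k = m := Equiv.apply_symm_apply π m
    have hki : i + 1 < k.1 := by
      rcases lt_trichotomy k.1 (i + 1) with hc | hc | hc
      · exfalso
        rcases Nat.lt_or_ge k.1 i with hc2 | hc2
        · have := mono_lt hn π h321 hb k ⟨i, hin⟩ (Fin.lt_def.2 hc2) hib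
          rw [Fin.lt_def, hπk, h1] at this
          simp [hm] at this
        · have hki : k = ⟨i, hin⟩ := Fin.ext (show k.1 = i by omega)
          rw [hki] at hπk
          rw [hπk] at h1
          simp [hm] at h1
      · exfalso
        have hki : k = ⟨i + 1, hin1⟩ := Fin.ext hc
        rw [hki] at hπk
        rw [hπk] at hgt
        simp [hm] at hgt
      · exact hc
    refine h132 ⟨⟨i, hin⟩, ⟨i + 1, hin1⟩, k, by simp [Fin.lt_def], Fin.lt_def.2 hki, ?_, ?_⟩
    · rw [Fin.lt_def, hπk, h1]; simp [hm]
    · rw [Fin.lt_def, hπk]; exact hgt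

lemma char {n : ℕ} (hn : 0 < n) (π : Equiv.Perm (Fin n))
    (h132 : Avoids132 π) (h321 : Avoids321 π) :
    ∃ a b : ℕ, ∃ h : a + b ≤ n, π = rotp n a b h := by
  set σ := π.symm with hσ
  set a := (π ⟨0, hn⟩ : Fin n).1 with hadef
  set b := (σ ⟨0, hn⟩ : Fin n).1 with hbdef
  have han : a < n := (π ⟨0, hn⟩).2
  have hbn : b < n := (σ ⟨0, hn⟩).2
  have h132' : Avoids132 σ := avoids132_symm h132
  have h321' : Avoids321 σ := avoids321_symm h321
  have hσσ : σ.symm = π := Equiv.symm_symm π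
  have hσb : (π.symm ⟨0, hn⟩ : Fin n).1 = b := rfl
  have hσa : (σ.symm ⟨0, hn⟩ : Fin n).1 = a := by rw [hσσ]
  have hC : ∀ i : ℕ, ∀ hi : i < n, i < b → (π ⟨i, hi⟩ : Fin n).1 = a + i := by
    intro i hi hib
    have := init_vals hn π h132 h321 rfl hσb i hib
    convert this using 3
  have hC' : ∀ i : ℕ, ∀ hi : i < n, i < a → (σ ⟨i, hi⟩ : Fin n).1 = b + i := by
    intro i hi hia
    have := init_vals hn σ h132' h321' rfl hσa i hia
    convert this using 3
  have hab : a + b ≤ n := by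
    rcases Nat.eq_zero_or_pos a with ha0 | ha0
    · have : π ⟨0, hn⟩ = ⟨0, hn⟩ := Fin.ext (by rw [← hadef, ha0])
      have hb0 : b = 0 := by
        rw [hbdef, hσ, show (⟨0, hn⟩ : Fin n) = π ⟨0, hn⟩ from this.symm,
          Equiv.symm_apply_apply]
      omega
    · have := hC' (a - 1) (by omega) (by omega)
      have h2 := (σ ⟨a - 1, by omega⟩).2
      omega
  have hup : ∀ i : Fin n, a + b ≤ i.1 → a + b ≤ (π i).1 := by
    intro i hi
    by_contra hcon
    push_neg at hcon
    rcases Nat.lt_or_ge (π i).1 a with hw | hw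
    · have h1 := hC' (π i).1 (π i).2 hw
      have h2 : σ ⟨(π i).1, (π i).2⟩ = i := by
        rw [show (⟨(π i).1, (π i).2⟩ : Fin n) = π i from rfl, hσ, Equiv.symm_apply_apply]
      rw [h2] at h1
      omega
    · have h1 := hC ((π i).1 - a) (by omega) (by omega)
      have h2 : π ⟨(π i).1 - a, by omega⟩ = π i := Fin.ext (by rw [h1]; omega)
      have h3 := π.injective h2
      have h4 : (π i).1 - a = i.1 := congrArg Fin.val h3
      omega
  have hup' : ∀ i : Fin n, a + b ≤ i.1 → a + b ≤ (σ i).1 := by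
    intro i hi
    by_contra hcon
    push_neg at hcon
    rcases Nat.lt_or_ge (σ i).1 b with hw | hw
    · have h1 := hC (σ i).1 (σ i).2 hw
      have h2 : π ⟨(σ i).1, (σ i).2⟩ = i := by
        rw [show (⟨(σ i).1, (σ i).2⟩ : Fin n) = σ i from rfl, hσ, Equiv.apply_symm_apply]
      rw [h2] at h1
      omega
    · have h1 := hC' ((σ i).1 - b) (by omega) (by omega)
      have h2 : σ ⟨(σ i).1 - b, by omega⟩ = σ i := Fin.ext (by rw [h1]; omega)
      have h3 := σ.injective h2
      have h4 : (σ i).1 - b = i.1 := congrArg Fin.val h3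
      omega
  have hgrow : ∀ i : ℕ, a + b ≤ i → ∀ hi : i < n, i ≤ (π ⟨i, hi⟩).1 := by
    intro i hai
    induction i, hai using Nat.le_induction with
    | base => intro hi; exact hup ⟨a + b, hi⟩ le_rfl
    | succ i hai ih =>
      intro hi
      have hi' : i < n := by omega
      have h1 := ih hi'
      have h2 := mono_ge hn π h132 hσb ⟨i, hi'⟩ ⟨i + 1, hi⟩ (by simp; omega)
        (by simp [Fin.lt_def])
      rw [Fin.lt_def] at h2
      omega
  have hgrow' : ∀ i : ℕ, a + b ≤ i → ∀ hi : i < n, i ≤ (σ ⟨i, hi⟩).1 := by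
    intro i hai
    induction i, hai using Nat.le_induction with
    | base => intro hi; exact hup' ⟨a + b, hi⟩ le_rfl
    | succ i hai ih =>
      intro hi
      have hi' : i < n := by omega
      have h1 := ih hi'
      have h2 := mono_ge hn σ h132' hσa ⟨i, hi'⟩ ⟨i + 1, hi⟩ (by simp; omega)
        (by simp [Fin.lt_def])
      rw [Fin.lt_def] at h2
      omega
  have hid : ∀ i : Fin n, a + b ≤ i.1 → (π i).1 = i.1 := by
    intro i hi
    have hw := hup i hi
    have h1 : i.1 ≤ (π i).1 := by
      have := hgrow i.1 hi i.2
      simpa using this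
    have h2 : (π i).1 ≤ i.1 := by
      have h3 := hgrow' (π i).1 hw (π i).2
      have h4 : σ ⟨(π i).1, (π i).2⟩ = i := by
        rw [show (⟨(π i).1, (π i).2⟩ : Fin n) = π i from rfl, hσ, Equiv.symm_apply_apply]
      rw [h4] at h3
      exact h3
    omega
  refine ⟨a, b, hab, ?_⟩
  refine Equiv.ext fun i => Fin.ext ?_
  rw [rotp_val]
  unfold rf
  split_ifs with h1 h2
  · have h' : (π i).1 = a + i.1 := by simpa using hC i.1 i.2 h1
    omega
  · have h3 := hC' (i.1 - b) (by omega) (by omega)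
    have h4 : σ ⟨i.1 - b, by omega⟩ = i := Fin.ext (by rw [h3]; omega)
    have h7 : (⟨i.1 - b, by omega⟩ : Fin n) = π i := (Equiv.symm_apply_eq π).mp h4
    exact congrArg Fin.val h7.symm
  · exact hid i (by omega)

end DPAux

namespace DPAux

lemma rotp_b_zero {n a : ℕ} (h : a + 0 ≤ n) : rotp n a 0 h = 1 := by
  refine Equiv.ext fun i => Fin.ext ?_
  rw [rotp_val]
  unfold rf
  have := i.2
  split_ifs <;> simp <;> omega

lemma rotp_a_zero {n b : ℕ} (h : 0 + b ≤ n) : rotp n 0 b h = 1 := by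
  refine Equiv.ext fun i => Fin.ext ?_
  rw [rotp_val]
  unfold rf
  have := i.2
  split_ifs <;> simp <;> omega

lemma one_diamond (v d : ℕ) : IsDiamond v d 1 := by
  intro i hi j hj h0 hjlt hl
  constructor <;> simp only [Equiv.Perm.coe_one, id_eq, Fin.mk_le_mk] <;> omega

lemma one_avoids132 (n : ℕ) : Avoids132 (1 : Equiv.Perm (Fin n)) := by
  rintro ⟨i, j, k, hij, hjk, h1, h2⟩
  simp only [Equiv.Perm.coe_one, id_eq] at h1 h2
  exact absurd (lt_trans hjk h2) (lt_irrefl _)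

lemma one_avoids321 (n : ℕ) : Avoids321 (1 : Equiv.Perm (Fin n)) := by
  rintro ⟨i, j, k, hij, hjk, h1, h2⟩
  simp only [Equiv.Perm.coe_one, id_eq] at h1 h2
  exact absurd (lt_trans hjk h1) (lt_irrefl _)

noncomputable def F (n : ℕ) (p : ℕ × ℕ) : Equiv.Perm (Fin n) :=
  if h : p.1 + p.2 ≤ n then rotp n p.1 p.2 h else 1

end DPAux

theorem avoids132_321_count (v d : ℕ) (hv : 4 ≤ v) (hd : 1 ≤ d) :
    Nat.card {π : Equiv.Perm (Fin (v * d)) // IsDiamond v d π ∧ Avoids132 π ∧ Avoids321 π} =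
      1 + v * (d * (d - 1) / 2) := by
  classical
  have hn : 0 < v * d := Nat.mul_pos (by omega) hd
  set n := v * d with hndef
  set T : Finset (ℕ × ℕ) :=
    Finset.filter (fun p : ℕ × ℕ => 1 ≤ p.1 ∧ 1 ≤ p.2 ∧ v ∣ p.2 ∧ p.1 + p.2 ≤ v * d)
      (Finset.range (v * d + 1) ×ˢ Finset.range (v * d + 1)) with hTdef
  -- the set equals an explicit finset
  have hset : {π : Equiv.Perm (Fin (v * d)) | IsDiamond v d π ∧ Avoids132 π ∧ Avoids321 π}
      = ↑(insert (1 : Equiv.Perm (Fin (v * d))) (T.image (DPAux.F (v * d)))) := by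
    ext π
    simp only [Set.mem_setOf_eq, Finset.coe_insert, Set.mem_insert_iff, Finset.coe_image,
      Set.mem_image, Finset.mem_coe]
    constructor
    · rintro ⟨hD, h132, h321⟩
      obtain ⟨a, b, hab, rfl⟩ := DPAux.char hn _ h132 h321
      rcases Nat.eq_zero_or_pos b with hb0 | hb0
      · left; subst hb0; exact DPAux.rotp_b_zero hab
      rcases Nat.eq_zero_or_pos a with ha0 | ha0
      · left; subst ha0; exact DPAux.rotp_a_zero hab
      have hdvd : v ∣ b := by
        by_contra hnd
        exact DPAux.rotp_not_diamond (by omega) ha0 hb0 hnd hab hD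
      right
      refine ⟨(a, b), ?_, ?_⟩
      · rw [hTdef]
        simp only [Finset.mem_filter, Finset.mem_product, Finset.mem_range]
        exact ⟨⟨by omega, by omega⟩, ha0, hb0, hdvd, hab⟩
      · rw [DPAux.F, dif_pos hab]
    · rintro (rfl | ⟨p, hp, rfl⟩)
      · exact ⟨DPAux.one_diamond v d, DPAux.one_avoids132 _, DPAux.one_avoids321 _⟩
      · rw [hTdef] at hp
        simp only [Finset.mem_filter, Finset.mem_product, Finset.mem_range] at hp
        obtain ⟨-, ha1, hb1, hdvd, hab⟩ := hp
        rw [DPAux.F, dif_pos hab]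
        exact ⟨DPAux.rotp_diamond (by omega) hdvd hab,
          DPAux.rotp_avoids132 hab, DPAux.rotp_avoids321 hab⟩
  -- one is not in the image
  have hone : (1 : Equiv.Perm (Fin (v * d))) ∉ T.image (DPAux.F (v * d)) := by
    intro hmem
    simp only [Finset.mem_image] at hmem
    obtain ⟨p, hp, hF⟩ := hmem
    rw [hTdef] at hp
    simp only [Finset.mem_filter, Finset.mem_product, Finset.mem_range] at hp
    obtain ⟨-, ha1, hb1, -, hab⟩ := hp
    rw [DPAux.F, dif_pos hab] at hF
    have := congrArg (fun e : Equiv.Perm (Fin (v * d)) => (e ⟨0, hn⟩).1) hF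
    simp only [Equiv.Perm.coe_one, id_eq] at this
    rw [DPAux.rotp_val] at this
    simp only [DPAux.rf] at this
    split_ifs at this <;> omega
  -- injectivity of F on T
  have hinj : Set.InjOn (DPAux.F (v * d)) ↑T := by
    intro p hp q hq hFeq
    simp only [Finset.coe_filter, Set.mem_setOf_eq, hTdef, Finset.mem_coe,
      Finset.mem_filter, Finset.mem_product, Finset.mem_range] at hp hq
    obtain ⟨-, hpa, hpb, -, hpab⟩ := hp
    obtain ⟨-, hqa, hqb, -, hqab⟩ := hq
    rw [DPAux.F, DPAux.F, dif_pos hpab, dif_pos hqab] at hFeq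
    have h1 := congrArg (fun e : Equiv.Perm (Fin (v * d)) => (e ⟨0, hn⟩).1) hFeq
    have h2 := congrArg (fun e : Equiv.Perm (Fin (v * d)) => (e.symm ⟨0, hn⟩).1) hFeq
    simp only [DPAux.rotp_val, DPAux.rotp_symm_val] at h1 h2
    have e1 : p.1 = q.1 := by
      simp only [DPAux.rf] at h1; split_ifs at h1 <;> omega
    have e2 : p.2 = q.2 := by
      simp only [DPAux.rf] at h2; split_ifs at h2 <;> omega
    exact Prod.ext e1 e2
  -- counting
  have hcard1 : Nat.card {π : Equiv.Perm (Fin (v * d)) //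
      IsDiamond v d π ∧ Avoids132 π ∧ Avoids321 π}
      = (insert (1 : Equiv.Perm (Fin (v * d))) (T.image (DPAux.F (v * d)))).card := by
    rw [← Set.ncard_coe_finset, ← hset]
    exact (Nat.card_coe_set_eq _).symm
  rw [hcard1, Finset.card_insert_of_notMem hone,
    Finset.card_image_of_injOn hinj]
  have hTcard : T.card = v * (d * (d - 1) / 2) := by
    have hT : T = (Finset.Ico 1 d).biUnion
        (fun k => (Finset.Icc 1 (v * d - k * v)).image (fun a => (a, k * v))) := by
      rw [hTdef]
      ext ⟨a, b⟩
      simp only [Finset.mem_filter, Finset.mem_product, Finset.mem_range, Finset.mem_biUnion,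
        Finset.mem_Ico, Finset.mem_Icc, Finset.mem_image, Prod.mk.injEq]
      constructor
      · rintro ⟨⟨han, hbn⟩, ha1, hb1, ⟨k, rfl⟩, hab⟩
        have hkv : v * k = k * v := Nat.mul_comm v k
        have hk1 : 1 ≤ k := Nat.pos_of_ne_zero (fun h => by subst h; simp at hb1)
        have hkd : k < d := by
          by_contra hc
          push_neg at hc
          have := Nat.mul_le_mul_left v hc
          omega
        exact ⟨k, ⟨hk1, hkd⟩, a, ⟨ha1, by omega⟩, rfl, Nat.mul_comm k v⟩
      · rintro ⟨k, ⟨hk1, hkd⟩, a', ⟨ha1, ha2⟩, rfl, rfl⟩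
        have h2 : (k + 1) * v ≤ d * v := Nat.mul_le_mul_right v hkd
        rw [Nat.succ_mul] at h2
        have h3 : v * d = d * v := Nat.mul_comm v d
        have h6 : v ≤ k * v := Nat.le_mul_of_pos_left v hk1
        refine ⟨⟨by omega, by omega⟩, ha1, by omega, ⟨k, (Nat.mul_comm k v)⟩, by omega⟩
    rw [hT, Finset.card_biUnion]
    · have hc : ∀ k ∈ Finset.Ico 1 d,
          ((Finset.Icc 1 (v * d - k * v)).image (fun a => (a, k * v))).card = v * (d - k) := by
        intro k hk
        rw [Finset.card_image_of_injective _ (fun x y hxy => (Prod.mk.injEq _ _ _ _ ▸ hxy).1),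
          Nat.card_Icc]
        simp only [Finset.mem_Ico] at hk
        have h2 : (k + 1) * v ≤ d * v := Nat.mul_le_mul_right v hk.2
        rw [Nat.succ_mul] at h2
        have h3 : v * d = d * v := Nat.mul_comm v d
        have h4 : v * (d - k) = v * d - v * k := Nat.mul_sub v d k
        have h5 : v * k = k * v := Nat.mul_comm v k
        omega
      rw [Finset.sum_congr rfl hc]
      rw [← Finset.mul_sum]
      congr 1
      rw [Finset.sum_Ico_eq_sum_range]
      have hpt0 : ∀ i ∈ Finset.range (d - 1), d - (1 + i) = (d - 1) - i := by
        intro i _; omega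
      rw [Finset.sum_congr rfl hpt0]
      have hrefl := Finset.sum_range_reflect (fun j => j + 1) (d - 1)
      have hpt : ∀ i ∈ Finset.range (d - 1), (d - 1) - i = (d - 1) - 1 - i + 1 := by
        intro i hi
        simp only [Finset.mem_range] at hi
        omega
      rw [Finset.sum_congr rfl hpt, hrefl, Finset.sum_add_distrib, Finset.sum_const,
        Finset.card_range, smul_eq_mul, mul_one]
      have hG := Finset.sum_range_id_mul_two (d - 1)
      have hidd : d * (d - 1) = (d - 1) * (d - 1 - 1) + 2 * (d - 1) := by
        rcases d with _ | e
        · simp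
        · rcases e with _ | f
          · simp
          · simp only [Nat.add_sub_cancel]
            ring
      omega
    · intro k hk k' hk' hne
      simp only [Finset.disjoint_left, Finset.mem_image]
      rintro ⟨a, b⟩ ⟨x, hx, hxe⟩ ⟨y, hy, hye⟩
      apply hne
      have h1 : b = k * v := (Prod.mk.injEq _ _ _ _ ▸ hxe).2.symm
      have h2 : b = k' * v := (Prod.mk.injEq _ _ _ _ ▸ hye).2.symm
      have : k * v = k' * v := by omega
      exact Nat.eq_of_mul_eq_mul_right (by omega) this
  omega
end

section
/- For v ≥ 4 and d ≥ 1, the number of diamond permutations of type (v,d) avoiding both 231 and 312 equals 2^{d(v-2)-1}. -/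
namespace DP

def SP (D : ℕ → Bool) (a : ℕ) : Prop := a = 0 ∨ D (a-1) = false

instance (D : ℕ → Bool) : DecidablePred (SP D) := fun a => by unfold SP; infer_instance

/-- layer start: greatest `a ≤ t` such that `a = 0` or gap `a-1` is an ascent. -/
def lstart (D : ℕ → Bool) (t : ℕ) : ℕ := Nat.findGreatest (SP D) t

def EP (D : ℕ → Bool) (t b : ℕ) : Prop := lstart D b ≤ t

instance (D : ℕ → Bool) (t : ℕ) : DecidablePred (EP D t) := fun b => by unfold EP; infer_instance

/-- layer end: greatest `b ≤ n-1` in the same layer as `t`. -/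
def lend (D : ℕ → Bool) (n t : ℕ) : ℕ := Nat.findGreatest (EP D t) (n-1)

variable {D : ℕ → Bool} {n t u b : ℕ}

lemma lstart_le : lstart D t ≤ t := Nat.findGreatest_le t

lemma lstart_spec : SP D (lstart D t) := Nat.findGreatest_spec (Nat.zero_le t) (Or.inl rfl)

lemma lstart_mono (h : t ≤ u) : lstart D t ≤ lstart D u :=
  Nat.le_findGreatest (lstart_le.trans h) lstart_spec

lemma lstart_is_greatest (h1 : lstart D t < u) (h2 : u ≤ t) : D (u-1) = true := by
  have h := Nat.findGreatest_is_greatest (P := SP D) h1 h2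
  unfold SP at h
  push_neg at h
  simpa using h.2

/-- all of a layer has the same `lstart`. -/
lemma lstart_eq_of_between (h1 : lstart D t ≤ u) (h2 : u ≤ t) : lstart D u = lstart D t := by
  refine le_antisymm ?_ (Nat.le_findGreatest h1 lstart_spec)
  by_contra h
  push_neg at h
  exact Nat.findGreatest_is_greatest (P := SP D) h (lstart_le.trans h2) lstart_spec

lemma lstart_succ_of_false (h : D t = false) : lstart D (t+1) = t+1 :=
  le_antisymm lstart_le (Nat.le_findGreatest (le_refl _) (Or.inr (by simpa using h)))

lemma lstart_succ_of_true (h : D t = true) : lstart D (t+1) = lstart D t := by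
  have hne : lstart D (t+1) ≠ t+1 := by
    intro he
    rcases lstart_spec (D := D) (t := t+1) with h0 | hf
    · omega
    · rw [he] at hf; simp at hf; rw [h] at hf; exact absurd hf (by simp)
  have hle : lstart D (t+1) ≤ t := by
    have := lstart_le (D := D) (t := t+1); omega
  exact le_antisymm (Nat.le_findGreatest hle lstart_spec) (lstart_mono (by omega))

lemma le_lend (ht : t ≤ n - 1) : t ≤ lend D n t :=
  Nat.le_findGreatest ht lstart_le

lemma lend_le : lend D n t ≤ n - 1 := Nat.findGreatest_le _

lemma lend_spec (ht : t ≤ n - 1) : lstart D (lend D n t) ≤ t :=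
  Nat.findGreatest_spec (P := EP D t) ht lstart_le

lemma lstart_lend (ht : t ≤ n - 1) : lstart D (lend D n t) = lstart D t :=
  (lstart_eq_of_between (t := lend D n t) (lend_spec ht) (le_lend ht)).symm

lemma lend_is_greatest (h1 : lend D n t < b) (h2 : b ≤ n - 1) : t < lstart D b := by
  have h := Nat.findGreatest_is_greatest (P := EP D t) h1 h2
  unfold EP at h; omega

/-- all of a layer has the same `lend`. -/
lemma lend_eq_of_between (ht : t ≤ n - 1) (h1 : lstart D t ≤ u) (h2 : u ≤ lend D n t) :
    lend D n u = lend D n t := by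
  have hu : u ≤ n - 1 := h2.trans lend_le
  refine le_antisymm ?_ (Nat.le_findGreatest (P := EP D u) lend_le
    (by show lstart D (lend D n t) ≤ u; rw [lstart_lend ht]; exact h1))
  by_contra h
  push_neg at h
  have h3 : lstart D (lend D n u) ≤ u :=
    Nat.findGreatest_spec (P := EP D u) hu lstart_le
  have h4 : t < lstart D (lend D n u) := lend_is_greatest h lend_le
  -- but lstart(lend u) ≤ u ≤ lend t ≤ lend u whence by between, lstart(lend t) ≥ lstart(lend u)>t
  have h5 : lstart D (lend D n t) = lstart D (lend D n u) :=
    lstart_eq_of_between (t := lend D n u) (u := lend D n t) (h3.trans h2) (le_of_lt h)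
  rw [lstart_lend ht] at h5
  have := lstart_le (D := D) (t := t)
  omega

/-- also lstart is constant on [lstart t, lend t] -/
lemma lstart_eq_of_between' (ht : t ≤ n - 1) (h1 : lstart D t ≤ u) (h2 : u ≤ lend D n t) :
    lstart D u = lstart D t := by
  rcases le_or_gt u t with h | h
  · exact lstart_eq_of_between h1 h
  · rw [← lstart_lend ht]
    exact lstart_eq_of_between (by rw [lstart_lend ht]; exact h1) h2

/-- the layered permutation as a function -/
def Lp (D : ℕ → Bool) (n t : ℕ) : ℕ := lstart D t + lend D n t - t

variable {D : ℕ → Bool} {n t u b : ℕ}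

lemma Lp_lt (ht : t < n) : Lp D n t < n := by
  have h1 : lend D n t ≤ n - 1 := lend_le
  have h2 : lstart D t ≤ t := lstart_le
  unfold Lp; omega

lemma lstart_le_Lp (ht : t ≤ n - 1) : lstart D t ≤ Lp D n t := by
  have := le_lend (D := D) ht; have := lstart_le (D := D) (t := t); unfold Lp; omega

lemma Lp_le_lend (ht : t ≤ n - 1) : Lp D n t ≤ lend D n t := by
  have := le_lend (D := D) ht; have := lstart_le (D := D) (t := t); unfold Lp; omega

lemma lstart_Lp (ht : t ≤ n - 1) : lstart D (Lp D n t) = lstart D t :=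
  lstart_eq_of_between' ht (lstart_le_Lp ht) (Lp_le_lend ht)

lemma lend_Lp (ht : t ≤ n - 1) : lend D n (Lp D n t) = lend D n t :=
  lend_eq_of_between ht (lstart_le_Lp ht) (Lp_le_lend ht)

lemma Lp_invol (ht : t ≤ n - 1) : Lp D n (Lp D n t) = t := by
  have h1 := lstart_Lp (D := D) ht
  have h2 := lend_Lp (D := D) ht
  have h3 := le_lend (D := D) ht
  have h4 := lstart_le (D := D) (t := t)
  unfold Lp at *
  omega

/-- the layered permutation -/
def Lperm (D : ℕ → Bool) (n : ℕ) : Equiv.Perm (Fin n) where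
  toFun t := ⟨Lp D n t, Lp_lt t.isLt⟩
  invFun t := ⟨Lp D n t, Lp_lt t.isLt⟩
  left_inv t := by
    ext
    exact Lp_invol (by omega)
  right_inv t := by
    ext
    exact Lp_invol (by omega)

lemma Lperm_apply (t : Fin n) : (Lperm D n t : ℕ) = Lp D n t := rfl

/-- descent characterization -/
lemma Lp_succ_lt_iff (ht : t + 1 ≤ n - 1) : Lp D n (t+1) < Lp D n t ↔ D t = true := by
  constructor
  · intro hlt
    by_contra h
    have hf : D t = false := by simpa using h
    -- ascent: Lp t = lstart t ≤ t < t+1 ≤ Lp (t+1)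
    have h1 : lstart D (t+1) = t+1 := lstart_succ_of_false hf
    have h2 : lend D n t = t := by
      by_contra h2
      have h3 : t + 1 ≤ lend D n t := by
        have := le_lend (D := D) (n := n) (t := t) (by omega); omega
      have h4 := lstart_eq_of_between' (D := D) (n := n) (t := t) (u := t+1) (by omega)
        (lstart_le.trans (by omega)) h3
      rw [h1] at h4
      have := lstart_le (D := D) (t := t); omega
    have h5 : Lp D n t ≤ t := by
      unfold Lp; rw [h2]; have := lstart_le (D := D) (t := t); omega
    have h6 : t + 1 ≤ Lp D n (t+1) := by
      have := le_lend (D := D) (n := n) (t := t+1) ht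
      unfold Lp; rw [h1]; omega
    omega
  · intro hd
    have h1 : lstart D (t+1) = lstart D t := lstart_succ_of_true hd
    have h2 : t + 1 ≤ lend D n t := by
      by_contra h2
      have h3 : lend D n t = t := by have := le_lend (D := D) (n := n) (t := t) (by omega); omega
      have := lend_is_greatest (D := D) (n := n) (t := t) (b := t+1) (by omega) ht
      rw [h1] at this
      have := lstart_le (D := D) (t := t); omega
    have h4 : lend D n (t+1) = lend D n t :=
      lend_eq_of_between (by omega) (lstart_le.trans (by omega)) h2
    have h5 := lstart_le (D := D) (t := t)
    unfold Lp
    rw [h1, h4]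
    omega

/-- the layered permutation satisfies Q: descending pairs lie in a common layer. -/
lemma Lp_Q (hi : t < u) (hu : u ≤ n - 1) (hlt : Lp D n u < Lp D n t) :
    Lp D n t + t = Lp D n u + u := by
  rcases le_or_gt u (lend D n t) with h | h
  · have h1 : lstart D u = lstart D t :=
      lstart_eq_of_between' (le_of_lt (hi.trans_le hu)) (lstart_le.trans (le_of_lt hi)) h
    have h2 : lend D n u = lend D n t :=
      lend_eq_of_between (le_of_lt (hi.trans_le hu)) (lstart_le.trans (le_of_lt hi)) h
    have h3 := lstart_le (D := D) (t := t)
    have h4 := le_lend (D := D) (n := n) (t := t) (le_of_lt (hi.trans_le hu))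
    unfold Lp at *
    omega
  · exfalso
    have h1 : t < lstart D u := lend_is_greatest h hu
    have h2 : Lp D n t ≤ lend D n t := Lp_le_lend (le_of_lt (hi.trans_le hu))
    have h3 : lstart D u ≤ Lp D n u := lstart_le_Lp hu
    have h4 : Lp D n t ≤ lend D n t := h2
    have h5 : lend D n t < lstart D u := by
      -- if lstart u ≤ lend t then lstart u same layer as t... 
      by_contra h5
      push_neg at h5
      have h6 : lstart D (lstart D u) = lstart D u := by
        rcases lstart_spec (D := D) (t := u) with h0 | hf
        · rw [h0]; simp [lstart]
        · rcases Nat.eq_zero_or_pos (lstart D u) with h0 | h0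
          · rw [h0]; simp [lstart]
          · obtain ⟨c, hc⟩ : ∃ c, lstart D u = c + 1 := ⟨lstart D u - 1, by omega⟩
            rw [hc] at hf ⊢
            exact lstart_succ_of_false (by simpa using hf)
      have h7 := lstart_eq_of_between' (D := D) (n := n) (t := t)
        (le_of_lt (hi.trans_le hu)) (u := lstart D u) (lstart_le.trans (le_of_lt h1)) h5
      rw [h6] at h7
      have := lstart_le (D := D) (t := t)
      omega
    omega

lemma lstart_eq_self (h : SP D t) : lstart D t = t :=
  le_antisymm lstart_le (Nat.le_findGreatest (le_refl _) h)

lemma lstart_idem : lstart D (lstart D t) = lstart D t := lstart_eq_self lstart_spec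

/-- The property equivalent to avoiding 231 and 312. -/
def Qp {n : ℕ} (π : Equiv.Perm (Fin n)) : Prop :=
  ∀ i j : Fin n, i < j → π j < π i → (π i : ℕ) + (i : ℕ) = (π j : ℕ) + (j : ℕ)

/-- The descent word of a permutation. -/
def desc {n : ℕ} (π : Equiv.Perm (Fin n)) : ℕ → Bool :=
  fun t => if h : t + 1 < n then decide (π ⟨t+1, h⟩ < π ⟨t, Nat.lt_of_succ_lt h⟩) else false

lemma desc_true_iff {n : ℕ} (π : Equiv.Perm (Fin n)) (t : ℕ) (h : t + 1 < n) :
    desc π t = true ↔ π ⟨t+1, h⟩ < π ⟨t, Nat.lt_of_succ_lt h⟩ := by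
  simp [desc, h]

theorem Q_eq_Lp {n : ℕ} (π : Equiv.Perm (Fin n)) (hQ : Qp π) :
    ∀ t (ht : t < n), ((π ⟨t, ht⟩ : Fin n) : ℕ) = Lp (desc π) n t := by
  intro t
  induction t using Nat.strong_induction_on with
  | _ t IH =>
  intro ht
  set D := desc π with hD
  set a := lstart D t with ha
  set b := lend D n t with hb
  have hale : a ≤ t := lstart_le
  have hble : t ≤ b := le_lend (by omega)
  have hbn : b ≤ n - 1 := lend_le
  have hlsb : lstart D b = a := lstart_lend (by omega)
  have hlea : lstart D a = a := lstart_idem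
  -- gaps strictly inside the layer are descents
  have hdesc : ∀ c, a < c → c ≤ b → D (c - 1) = true := by
    intro c h1 h2
    rw [← hlsb] at h1
    exact lstart_is_greatest h1 h2
  -- the descent chain within the layer
  have hchain : ∀ u, a ≤ u → u ≤ b → ∀ (hu : u < n) (han : a < n),
      (π ⟨u, hu⟩ : ℕ) + u = (π ⟨a, han⟩ : ℕ) + a := by
    intro u hau
    induction u, hau using Nat.le_induction with
    | base => intro h2 hu han; rfl
    | succ c hac IHc =>
      intro h2 hu han
      have hd : D c = true := by have := hdesc (c+1) (by omega) h2; simpa using this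
      have hcn : c < n := by omega
      have hdlt : π ⟨c+1, hu⟩ < π ⟨c, hcn⟩ := (desc_true_iff π c hu).mp hd
      have hq := hQ ⟨c, hcn⟩ ⟨c+1, hu⟩ (by simp [Fin.lt_def]) hdlt
      have := IHc (by omega) hcn han
      simp only [Fin.val_mk] at hq ⊢
      omega
  -- positions before the layer have values before the layer
  have hpre : ∀ u (hu : u < n), u < a → (π ⟨u, hu⟩ : ℕ) < a := by
    intro u hu hua
    have hIH := IH u (by omega) hu
    have hlend : lend D n u < a := by
      by_contra hcon
      push_neg at hcon
      have h7 := lstart_eq_of_between' (D := D) (n := n) (t := u) (u := a)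
        (by omega) (lstart_le.trans (le_of_lt hua)) hcon
      rw [hlea] at h7
      have := lstart_le (D := D) (t := u)
      omega
    have := Lp_le_lend (D := D) (n := n) (t := u) (by omega)
    omega
  have han : a < n := by omega
  -- values in the layer are at least a
  have hge : ∀ u (hu : u < n), a ≤ u → a ≤ (π ⟨u, hu⟩ : ℕ) := by
    intro u hu hau
    by_contra hcon
    push_neg at hcon
    -- π restricted to [0,a) is a bijection onto [0,a)
    have hinj : Function.Injective (fun w : Fin a => (⟨(π ⟨w, by omega⟩ : Fin n), hpre w (by omega) w.2⟩ : Fin a)) := by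
      intro w1 w2 hw
      simp only [Fin.mk.injEq, Fin.val_eq_val] at hw
      have := π.injective hw
      simp only [Fin.mk.injEq] at this
      exact Fin.ext this
    have hsurj := Finite.surjective_of_injective hinj
    obtain ⟨w, hw⟩ := hsurj ⟨(π ⟨u, hu⟩ : ℕ), hcon⟩
    simp only [Fin.mk.injEq, Fin.val_eq_val] at hw
    have := π.injective hw
    simp only [Fin.mk.injEq] at this
    omega
  have hbn' : b < n := by omega
  -- π a = b
  have hpab : (π ⟨a, han⟩ : ℕ) = b := by
    have hcb := hchain b (by omega) (le_refl _) hbn' han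
    have hgb := hge b hbn' (by omega)
    have hub : (π ⟨a, han⟩ : ℕ) ≤ b := by
      rcases Nat.eq_or_lt_of_le hbn with he | hlt
      · have := (π ⟨a, han⟩).2; omega
      · -- b < n - 1 : gap b is an ascent
        have hdb : D b = false := by
          by_contra hdb
          have hdb' : D b = true := by simpa using hdb
          have h1 : lstart D (b+1) = lstart D b := lstart_succ_of_true hdb'
          have h2 := lend_is_greatest (D := D) (n := n) (t := t) (b := b+1) (by omega) (by omega)
          omega
        have hasc : (π ⟨b, hbn'⟩ : ℕ) < (π ⟨b+1, by omega⟩ : ℕ) := by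
          have h1 : ¬ (π ⟨b+1, by omega⟩ < π ⟨b, hbn'⟩) := by
            intro hcon
            have h1' := (desc_true_iff π b (by omega)).mpr hcon
            rw [← hD, hdb] at h1'
            exact absurd h1' (by simp)
          have h2 : π ⟨b+1, by omega⟩ ≠ π ⟨b, hbn'⟩ := by
            intro hcon2
            have := π.injective hcon2
            simp only [Fin.mk.injEq] at this
            omega
          have := lt_of_le_of_ne (not_lt.mp h1) (Ne.symm h2)
          exact this
        by_contra hcon
        push_neg at hcon
        -- w := π b - 1
        set w : ℕ := (π ⟨b, hbn'⟩ : ℕ) - 1 with hw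
        have hpbge : a + 1 ≤ (π ⟨b, hbn'⟩ : ℕ) := by omega
        have hwn : w < n := by have := (π ⟨b, hbn'⟩).2; omega
        set x : Fin n := π.symm ⟨w, hwn⟩ with hx
        have hpx : (π x : ℕ) = w := by rw [hx]; simp
        have hxge : a ≤ (x : ℕ) := by
          by_contra hc2
          push_neg at hc2
          have h8 := hpre x x.2 hc2
          rw [show (⟨(x : ℕ), x.2⟩ : Fin n) = x from rfl] at h8
          omega
        have hxgt : b < (x : ℕ) := by
          rcases le_or_gt (x : ℕ) b with hc2 | hc2
          · exfalso
            have h9 := hchain x hxge hc2 x.2 han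
            have hxx : (⟨(x : ℕ), x.2⟩ : Fin n) = x := rfl
            rw [hxx] at h9
            omega
          · exact hc2
        rcases Nat.eq_or_lt_of_le hxgt with he | hlt2
        · -- x = b + 1 : contradicts ascent
          have : π ⟨b+1, by omega⟩ = π x := by congr 1; exact Fin.ext he
          rw [this] at hasc
          omega
        · -- x > b + 1 : Q gives x = b+1
          have hq := hQ ⟨b, hbn'⟩ x (by simp [Fin.lt_def]; omega) (by simp only [Fin.lt_def, Fin.val_mk]; omega)
          simp only [Fin.val_mk] at hq
          omega
    omega
  -- conclude
  have hct := hchain t hale hble ht han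
  have hlp1 : lstart D (Lp D n t) = a := lstart_Lp (by omega)
  unfold Lp
  omega

lemma Lperm_Qp {n : ℕ} (D : ℕ → Bool) : Qp (Lperm D n) := by
  intro i j hij hji
  rw [Fin.lt_def] at hij hji
  simp only [Lperm_apply] at hji ⊢
  exact Lp_Q hij (by omega) hji

theorem avoids_iff_Qp {n : ℕ} (π : Equiv.Perm (Fin n)) :
    (Avoids231 π ∧ Avoids312 π) ↔ Qp π := by
  constructor
  · rintro ⟨h231, h312⟩
    -- adjacent descents drop by exactly 1
    have adj : ∀ t (h : t + 1 < n) (ht : t < n), π ⟨t+1, h⟩ < π ⟨t, ht⟩ →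
        (π ⟨t, ht⟩ : ℕ) = (π ⟨t+1, h⟩ : ℕ) + 1 := by
      intro t h ht hlt
      by_contra hne
      rw [Fin.lt_def] at hlt
      have hgt : (π ⟨t+1, h⟩ : ℕ) + 1 < (π ⟨t, ht⟩ : ℕ) := by omega
      have hmn : ((π ⟨t, ht⟩ : ℕ) - 1) < n := by have := (π ⟨t, ht⟩).2; omega
      set m : Fin n := ⟨(π ⟨t, ht⟩ : ℕ) - 1, hmn⟩ with hm
      set k : Fin n := π.symm m with hk
      have hpk : π k = m := by rw [hk]; simp
      have hkt : k ≠ ⟨t, ht⟩ := by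
        intro he; rw [he] at hpk
        have : (π ⟨t, ht⟩ : ℕ) = (π ⟨t, ht⟩ : ℕ) - 1 := congrArg Fin.val hpk
        omega
      have hkt1 : k ≠ ⟨t+1, h⟩ := by
        intro he; rw [he] at hpk
        have : (π ⟨t+1, h⟩ : ℕ) = (π ⟨t, ht⟩ : ℕ) - 1 := congrArg Fin.val hpk
        omega
      have hkv : (k : ℕ) ≠ t := fun hc => hkt (Fin.ext hc)
      have hkv1 : (k : ℕ) ≠ t + 1 := fun hc => hkt1 (Fin.ext hc)
      rcases lt_or_gt_of_ne hkv with hlt2 | hgt2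
      · exact h231 ⟨k, ⟨t, ht⟩, ⟨t+1, h⟩, by rw [Fin.lt_def]; exact hlt2,
          by rw [Fin.lt_def]; simp, by rw [Fin.lt_def, hpk]; simp [hm]; omega,
          by rw [Fin.lt_def, hpk]; simp [hm]; omega⟩
      · have : t + 1 < (k : ℕ) := by omega
        exact h312 ⟨⟨t, ht⟩, ⟨t+1, h⟩, k, by rw [Fin.lt_def]; simp,
          by rw [Fin.lt_def]; exact this, by rw [Fin.lt_def, hpk]; simp [hm]; omega,
          by rw [Fin.lt_def, hpk]; simp [hm]; omega⟩
    have main : ∀ N, ∀ i j : Fin n, (j : ℕ) - (i : ℕ) = N → i < j → π j < π i →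
        (π i : ℕ) + (i : ℕ) = (π j : ℕ) + (j : ℕ) := by
      intro N
      induction N using Nat.strong_induction_on with
      | _ N IH =>
      intro i j hN hij hji
      rw [Fin.lt_def] at hij hji
      have hi1 : (i : ℕ) + 1 < n := by have := j.2; omega
      have hii : (⟨(i : ℕ), i.2⟩ : Fin n) = i := rfl
      rcases lt_trichotomy (π ⟨(i : ℕ) + 1, hi1⟩ : ℕ) (π i : ℕ) with hc | hc | hc
      · have hadj := adj (i : ℕ) hi1 i.2 (by rw [Fin.lt_def]; rw [hii]; exact hc)
        rw [hii] at hadj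
        rcases eq_or_lt_of_le (show (i : ℕ) + 1 ≤ (j : ℕ) from hij) with he | hlt
        · have : (⟨(i : ℕ) + 1, hi1⟩ : Fin n) = j := Fin.ext he
          rw [this] at hadj
          omega
        · rcases lt_trichotomy (π j : ℕ) (π ⟨(i : ℕ) + 1, hi1⟩ : ℕ) with hc2 | hc2 | hc2
          · have hIH := IH ((j : ℕ) - ((i : ℕ) + 1)) (by omega) ⟨(i : ℕ) + 1, hi1⟩ j rfl
              (by rw [Fin.lt_def]; exact hlt) (by rw [Fin.lt_def]; exact hc2)
            simp only [Fin.val_mk] at hIH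
            omega
          · exfalso
            have : (⟨(i : ℕ) + 1, hi1⟩ : Fin n) = j := π.injective (Fin.ext hc2.symm ▸ rfl)
            have := congrArg Fin.val this
            simp at this
            omega
          · exact absurd (h312 ⟨i, ⟨(i : ℕ) + 1, hi1⟩, j, by rw [Fin.lt_def]; simp,
              by rw [Fin.lt_def]; exact hlt, by rw [Fin.lt_def]; exact hc2,
              by simp only [Fin.lt_def, Fin.val_mk]; omega⟩) (by simp)
      · exfalso
        have : (⟨(i : ℕ) + 1, hi1⟩ : Fin n) = i := π.injective (Fin.ext hc)
        have := congrArg Fin.val this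
        simp at this
      · have hne : (i : ℕ) + 1 ≠ (j : ℕ) := by
          intro he
          have : (⟨(i : ℕ) + 1, hi1⟩ : Fin n) = j := Fin.ext he
          rw [this] at hc
          omega
        exact absurd (h231 ⟨i, ⟨(i : ℕ) + 1, hi1⟩, j, by rw [Fin.lt_def]; simp,
          by simp only [Fin.lt_def, Fin.val_mk]; omega, by simp only [Fin.lt_def, Fin.val_mk]; omega,
          by rw [Fin.lt_def]; exact hc⟩) (by simp)
    intro i j hij hji
    exact main ((j : ℕ) - (i : ℕ)) i j rfl hij hji
  · intro hQ
    constructor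
    · rintro ⟨i, j, k, hij, hjk, h1, h2⟩
      have e1 := hQ i k (hij.trans hjk) h1
      have e2 := hQ j k hjk (h1.trans h2)
      rw [Fin.lt_def] at hij hjk h1 h2
      omega
    · rintro ⟨i, j, k, hij, hjk, h1, h2⟩
      have e1 := hQ i j hij (h1.trans h2)
      have e2 := hQ i k (hij.trans hjk) h2
      rw [Fin.lt_def] at hij hjk h1 h2
      omega

lemma desc_false_iff {n : ℕ} (π : Equiv.Perm (Fin n)) (t : ℕ) (h : t + 1 < n) :
    desc π t = false ↔ π ⟨t, Nat.lt_of_succ_lt h⟩ < π ⟨t+1, h⟩ := by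
  have hne : π ⟨t+1, h⟩ ≠ π ⟨t, Nat.lt_of_succ_lt h⟩ := by
    intro hc
    have := π.injective hc
    simp only [Fin.mk.injEq] at this
    omega
  constructor
  · intro hf
    have h1 : ¬ (π ⟨t+1, h⟩ < π ⟨t, Nat.lt_of_succ_lt h⟩) := by
      intro hc
      have := (desc_true_iff π t h).mpr hc
      rw [hf] at this
      exact absurd this (by simp)
    exact lt_of_le_of_ne (not_lt.mp h1) (Ne.symm hne)
  · intro hlt
    by_contra hc
    have hc' : desc π t = true := by simpa using hc
    have := (desc_true_iff π t h).mp hc'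
    exact absurd hlt (not_lt.mpr (le_of_lt this))

lemma diamond_iff_good (v d : ℕ) (hv : 4 ≤ v) (π : Equiv.Perm (Fin (v*d))) (hQ : Qp π) :
    IsDiamond v d π ↔
      ∀ i, i < d → desc π (i*v) = false ∧ desc π (i*v + (v-2)) = false := by
  have hkey : ∀ i, i < d → i*v + v ≤ v*d := by
    intro i hi
    have h1 : (i+1)*v ≤ d*v := Nat.mul_le_mul_right v (by omega)
    have h2 : (i+1)*v = i*v + v := by ring
    have h3 : d*v = v*d := Nat.mul_comm d v
    omega
  constructor
  · intro hdia i hi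
    have hk := hkey i hi
    have h0 : i*v < v*d := by omega
    have h1 : i*v + 1 < v*d := by omega
    have hl : i*v + (v-1) < v*d := by omega
    constructor
    · have := (hdia i hi 1 (by omega) h0 h1 hl).1
      rw [desc_false_iff π (i*v) h1]
      exact lt_of_le_of_ne this (by
        intro hc
        have := π.injective hc
        simp only [Fin.mk.injEq] at this
        omega)
    · have h2 : i*v + (v-2) < v*d := by omega
      have h3 : i*v + (v-2) + 1 < v*d := by omega
      have := (hdia i hi (v-2) (by omega) h0 h2 hl).2
      rw [desc_false_iff π (i*v + (v-2)) h3]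
      have he : (⟨i*v + (v-2) + 1, h3⟩ : Fin (v*d)) = ⟨i*v + (v-1), hl⟩ := Fin.ext (by simp only [Fin.val_mk]; omega)
      rw [he]
      exact lt_of_le_of_ne this (by
        intro hc
        have := π.injective hc
        simp only [Fin.mk.injEq] at this
        omega)
  · intro hgood i hi j hj h0 hjlt hl
    have hk := hkey i hi
    have h1 : i*v + 1 < v*d := by omega
    have h2 : i*v + (v-2) < v*d := by omega
    have h3 : i*v + (v-2) + 1 < v*d := by omega
    have asc1 : (π ⟨i*v, h0⟩ : ℕ) < (π ⟨i*v + 1, h1⟩ : ℕ) := by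
      have := (desc_false_iff π (i*v) h1).mp (hgood i hi).1
      rw [Fin.lt_def] at this
      exact this
    have asc2 : (π ⟨i*v + (v-2), h2⟩ : ℕ) < (π ⟨i*v + (v-1), hl⟩ : ℕ) := by
      have := (desc_false_iff π (i*v + (v-2)) h3).mp (hgood i hi).2
      rw [Fin.lt_def] at this
      have he : (⟨i*v + (v-2) + 1, h3⟩ : Fin (v*d)) = ⟨i*v + (v-1), hl⟩ := Fin.ext (by simp only [Fin.val_mk]; omega)
      rw [he] at this
      exact this
    constructor
    · rcases Nat.eq_zero_or_pos j with hj0 | hj0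
      · exact le_of_eq (by congr 1; exact Fin.ext (by simp only [Fin.val_mk]; omega))
      · by_contra hcon
        push_neg at hcon
        rw [Fin.lt_def] at hcon
        have hq1 := hQ ⟨i*v, h0⟩ ⟨i*v + j, hjlt⟩ (by simp only [Fin.lt_def, Fin.val_mk]; omega)
          (by rw [Fin.lt_def]; exact hcon)
        simp only [Fin.val_mk] at hq1 hcon
        rcases Nat.eq_or_lt_of_le hj0 with hj1 | hj1
        · have he : (⟨i*v + j, hjlt⟩ : Fin (v*d)) = ⟨i*v + 1, h1⟩ := Fin.ext (by simp only [Fin.val_mk]; omega)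
          rw [he] at hcon
          omega
        · have hc2 : (π ⟨i*v + j, hjlt⟩ : ℕ) < (π ⟨i*v + 1, h1⟩ : ℕ) := by omega
          have hq2 := hQ ⟨i*v + 1, h1⟩ ⟨i*v + j, hjlt⟩
            (by simp only [Fin.lt_def, Fin.val_mk]; omega) (by rw [Fin.lt_def]; exact hc2)
          simp only [Fin.val_mk] at hq2
          omega
    · rcases Nat.eq_or_lt_of_le (show j + 1 ≤ v from hj) with hjv | hjv
      · exact le_of_eq (by congr 1; exact Fin.ext (by simp only [Fin.val_mk]; omega))
      · -- j ≤ v - 2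
        by_contra hcon
        push_neg at hcon
        rw [Fin.lt_def] at hcon
        have hq1 := hQ ⟨i*v + j, hjlt⟩ ⟨i*v + (v-1), hl⟩
          (by simp only [Fin.lt_def, Fin.val_mk]; omega) (by rw [Fin.lt_def]; exact hcon)
        simp only [Fin.val_mk] at hq1 hcon
        rcases Nat.eq_or_lt_of_le (show j ≤ v - 2 by omega) with hj2 | hj2
        · have he : (⟨i*v + j, hjlt⟩ : Fin (v*d)) = ⟨i*v + (v-2), h2⟩ := Fin.ext (by simp only [Fin.val_mk]; omega)
          rw [he] at hcon hq1
          omega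
        · rcases lt_trichotomy (π ⟨i*v + (v-2), h2⟩ : ℕ) (π ⟨i*v + j, hjlt⟩ : ℕ)
            with hc2 | hc2 | hc2
          · have hq2 := hQ ⟨i*v + j, hjlt⟩ ⟨i*v + (v-2), h2⟩
              (by simp only [Fin.lt_def, Fin.val_mk]; omega) (by rw [Fin.lt_def]; exact hc2)
            simp only [Fin.val_mk] at hq2
            omega
          · have := π.injective (Fin.ext hc2 : π ⟨i*v + (v-2), h2⟩ = π ⟨i*v + j, hjlt⟩)
            simp only [Fin.mk.injEq] at this
            omega
          · omega

/-- extend a finite descent word by `false`. -/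
def extD (m : ℕ) (Dm : Fin m → Bool) : ℕ → Bool :=
  fun t => if h : t < m then Dm ⟨t, h⟩ else false

lemma desc_Lperm (E : ℕ → Bool) (n t : ℕ) (h : t + 1 < n) : desc (Lperm E n) t = E t := by
  have hiff : desc (Lperm E n) t = true ↔ E t = true := by
    rw [desc_true_iff _ t h, Fin.lt_def]
    simp only [Lperm_apply, Fin.val_mk]
    exact Lp_succ_lt_iff (by omega)
  cases hEt : E t
  · rw [hEt] at hiff
    rw [Bool.eq_false_iff]
    intro hc
    exact absurd (hiff.mp hc) (by simp)
  · rw [hEt] at hiff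
    exact hiff.mpr rfl

theorem main_count (v d : ℕ) (hv : 4 ≤ v) (hd : 1 ≤ d) :
    Nat.card {π : Equiv.Perm (Fin (v * d)) // IsDiamond v d π ∧ Avoids231 π ∧ Avoids312 π} =
      2 ^ (d * (v - 2) - 1) := by
  classical
  have hn : 4 ≤ v * d := le_trans hv (Nat.le_mul_of_pos_right v (by omega))
  have hkey : ∀ i, i < d → i*v + v ≤ v*d := by
    intro i hi
    have h1 : (i+1)*v ≤ d*v := Nat.mul_le_mul_right v (by omega)
    have h2 : (i+1)*v = i*v + v := by ring
    have h3 : d*v = v*d := Nat.mul_comm d v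
    omega
  set F : Finset ℕ := ((Finset.range d).image (fun i => i*v)) ∪
      ((Finset.range d).image (fun i => i*v + (v-2))) with hF
  have hmemF : ∀ t : ℕ, t ∈ F ↔ ∃ i, i < d ∧ (t = i*v ∨ t = i*v + (v-2)) := by
    intro t
    simp only [hF, Finset.mem_union, Finset.mem_image, Finset.mem_range]
    constructor
    · rintro (⟨i, hi, rfl⟩ | ⟨i, hi, rfl⟩)
      · exact ⟨i, hi, Or.inl rfl⟩
      · exact ⟨i, hi, Or.inr rfl⟩
    · rintro ⟨i, hi, (rfl | rfl)⟩
      · exact Or.inl ⟨i, hi, rfl⟩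
      · exact Or.inr ⟨i, hi, rfl⟩
  have hFlt : ∀ x ∈ F, x < v*d - 1 := by
    intro x hx
    obtain ⟨i, hi, hio⟩ := (hmemF x).mp hx
    have := hkey i hi
    omega
  have hQdia : ∀ π : Equiv.Perm (Fin (v*d)),
      (IsDiamond v d π ∧ Avoids231 π ∧ Avoids312 π) ↔
      (Qp π ∧ ∀ i, i < d → desc π (i*v) = false ∧ desc π (i*v+(v-2)) = false) := by
    intro π
    constructor
    · rintro ⟨hdia, hav⟩
      have hQ := (avoids_iff_Qp π).mp hav
      exact ⟨hQ, (diamond_iff_good v d hv π hQ).mp hdia⟩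
    · rintro ⟨hQ, hgood⟩
      exact ⟨(diamond_iff_good v d hv π hQ).mpr hgood, (avoids_iff_Qp π).mpr hQ⟩
  have e1 : {π : Equiv.Perm (Fin (v * d)) // IsDiamond v d π ∧ Avoids231 π ∧ Avoids312 π} ≃
      {D : Fin (v*d-1) → Bool // ∀ t : Fin (v*d-1), (t : ℕ) ∈ F → D t = false} := by
    refine ⟨fun p => ⟨fun t => desc p.1 t.1, ?_⟩, fun q => ⟨Lperm (extD (v*d-1) q.1) (v*d), ?_⟩,
      ?_, ?_⟩
    · intro t htF
      obtain ⟨hQ, hgood⟩ := (hQdia p.1).mp p.2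
      obtain ⟨i, hi, hio⟩ := (hmemF t.1).mp htF
      rcases hio with he | he
      · show desc p.1 t.1 = false
        rw [he]
        exact (hgood i hi).1
      · show desc p.1 t.1 = false
        rw [he]
        exact (hgood i hi).2
    · apply (hQdia _).mpr
      refine ⟨Lperm_Qp _, ?_⟩
      intro i hi
      have hk := hkey i hi
      have hm1 : i*v ∈ F := (hmemF _).mpr ⟨i, hi, Or.inl rfl⟩
      have hm2 : i*v + (v-2) ∈ F := (hmemF _).mpr ⟨i, hi, Or.inr rfl⟩
      have hb1 := hFlt _ hm1
      have hb2 := hFlt _ hm2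
      constructor
      · rw [desc_Lperm _ _ _ (by omega)]
        show extD (v*d-1) q.1 (i*v) = false
        unfold extD
        rw [dif_pos hb1]
        exact q.2 _ hm1
      · rw [desc_Lperm _ _ _ (by omega)]
        show extD (v*d-1) q.1 (i*v + (v-2)) = false
        unfold extD
        rw [dif_pos hb2]
        exact q.2 _ hm2
    · rintro ⟨π, hp⟩
      have hQ := ((hQdia π).mp hp).1
      apply Subtype.ext
      apply Equiv.ext
      intro u
      apply Fin.ext
      show (Lperm (extD (v*d-1) fun t : Fin (v*d-1) => desc π t.1) (v*d) u : ℕ) = (π u : ℕ)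
      have hE : extD (v*d-1) (fun t : Fin (v*d-1) => desc π t.1) = desc π := by
        funext s
        unfold extD
        by_cases hs : s < v*d-1
        · rw [dif_pos hs]
        · rw [dif_neg hs]
          show false = desc π s
          unfold desc
          rw [dif_neg (by omega)]
      rw [hE, Lperm_apply]
      have := Q_eq_Lp π hQ u.1 u.2
      simpa using this.symm
    · rintro ⟨D, hD⟩
      apply Subtype.ext
      funext t
      show desc (Lperm (extD (v*d-1) D) (v*d)) t.1 = D t
      rw [desc_Lperm _ _ _ (by have := t.2; omega)]
      show extD (v*d-1) D t.1 = D t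
      unfold extD
      rw [dif_pos t.2]
  have e2 : {D : Fin (v*d-1) → Bool // ∀ t : Fin (v*d-1), (t : ℕ) ∈ F → D t = false} ≃
      ({t : Fin (v*d-1) // (t : ℕ) ∉ F} → Bool) := by
    refine ⟨fun q t => q.1 t.1, fun g => ⟨fun t => if h : (t : ℕ) ∈ F then false else g ⟨t, h⟩,
      fun t ht => dif_pos ht⟩, ?_, ?_⟩
    · intro q
      apply Subtype.ext
      funext t
      by_cases h : (t : ℕ) ∈ F
      · show dite _ _ _ = q.1 t
        rw [dif_pos h, q.2 t h]
      · show dite _ _ _ = q.1 t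
        rw [dif_neg h]
    · intro g
      funext t
      show dite _ _ _ = g t
      rw [dif_neg t.2]
  rw [Nat.card_congr (e1.trans e2), Nat.card_fun]
  have hinj1 : Function.Injective (fun i : ℕ => i*v) := fun a b h =>
    Nat.eq_of_mul_eq_mul_right (by omega) h
  have hinj2 : Function.Injective (fun i : ℕ => i*v + (v-2)) := by
    intro a b h
    simp only at h
    exact Nat.eq_of_mul_eq_mul_right (show 0 < v by omega) (by omega)
  have hdisj : Disjoint ((Finset.range d).image (fun i => i*v))
      ((Finset.range d).image (fun i => i*v + (v-2))) := by
    rw [Finset.disjoint_left]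
    intro x hx1 hx2
    simp only [Finset.mem_image, Finset.mem_range] at hx1 hx2
    obtain ⟨i, hi, hie⟩ := hx1
    obtain ⟨j, hj, hje⟩ := hx2
    rcases le_or_gt i j with h | h
    · have h5 : i*v ≤ j*v := Nat.mul_le_mul_right v h
      omega
    · have h7 : (j+1)*v ≤ i*v := Nat.mul_le_mul_right v h
      have h6 : (j+1)*v = j*v + v := by ring
      omega
  have hFcard : F.card = 2*d := by
    rw [hF, Finset.card_union_of_disjoint hdisj, Finset.card_image_of_injective _ hinj1,
      Finset.card_image_of_injective _ hinj2, Finset.card_range]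
    omega
  have e3 : {t : Fin (v*d-1) // (t : ℕ) ∈ F} ≃ {x : ℕ // x ∈ F} :=
    ⟨fun t => ⟨t.1.1, t.2⟩, fun x => ⟨⟨x.1, hFlt x.1 x.2⟩, x.2⟩,
      fun t => by apply Subtype.ext; apply Fin.ext; rfl, fun x => by apply Subtype.ext; rfl⟩
  have hcard1 : Fintype.card {t : Fin (v*d-1) // (t : ℕ) ∈ F} = 2*d := by
    rw [Fintype.card_congr e3, Fintype.card_coe, hFcard]
  have hcard2 : Nat.card {t : Fin (v*d-1) // (t : ℕ) ∉ F} = (v*d-1) - 2*d := by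
    rw [Nat.card_eq_fintype_card, Fintype.card_subtype_compl, hcard1, Fintype.card_fin]
  rw [hcard2]
  have hcb : Nat.card Bool = 2 := by simp [Nat.card_eq_fintype_card]
  rw [hcb]
  congr 1
  have hds : d*(v-2) + d*2 = d*v := by
    rw [← Nat.mul_add]
    congr 1
    omega
  have hcomm : v*d = d*v := Nat.mul_comm v d
  have hvd : 4*d ≤ v*d := Nat.mul_le_mul_right d hv
  omega

end DP

theorem avoids231_312_count (v d : ℕ) (hv : 4 ≤ v) (hd : 1 ≤ d) :
    Nat.card {π : Equiv.Perm (Fin (v * d)) // IsDiamond v d π ∧ Avoids231 π ∧ Avoids312 π} =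
      2 ^ (d * (v - 2) - 1) := DP.main_count v d hv hd
end
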